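/- arXiv:2601.04067 — 4 statements merged into one kernel-verified Lean document; each statement's English description precedes it below -/
import Mathlib

section
/- (L^p law of large numbers for negatively dependent averaging) Let p ∈ [1,∞) and let X be a random variable with E[|X|^p] < ∞. Let (X_n)_{n≥0} be a sequence of random variables such that X₀ has the same distribution as X and, for every n ≥ 1, there exist random variables X₍ₙ₋₁₎⁽¹⁾ and X₍ₙ₋₁₎⁽²⁾, each having the same distribution as X₍ₙ₋₁₎, such that the pair (X₍ₙ₋₁₎⁽¹⁾, X₍ₙ₋₁₎⁽²⁾) is negatively quadrant dependent and X_n = (X₍ₙ₋₁₎⁽¹⁾ + X₍ₙ₋₁₎⁽²⁾)/2. Then E[|X_n − E[X]|^p] → 0 as n → ∞, i.e., X_n → E[X] in L^p. -/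
open MeasureTheory ProbabilityTheory Filter
open scoped ENNReal

section Defs

variable {Ω : Type*} [MeasurableSpace Ω]

/-- The probability space is atomless. -/
def Atomless (μ : Measure Ω) : Prop :=
  ∀ s : Set Ω, MeasurableSet s → 0 < μ s →
    ∃ t : Set Ω, MeasurableSet t ∧ t ⊆ s ∧ 0 < μ t ∧ μ t < μ s

/-- `X` and `Y` are identically distributed. -/
def SameDist (μ : Measure Ω) (X Y : Ω → ℝ) : Prop :=
  Measure.map X μ = Measure.map Y μ

/-- `(X, Y)` is an antimonotonic pair. -/
def Antimonotonic (μ : Measure Ω) (X Y : Ω → ℝ) : Prop :=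
  ∀ᵐ p ∂(μ.prod μ), (X p.1 - X p.2) * (Y p.1 - Y p.2) ≤ 0

/-- `(X, Y)` is a comonotonic pair. -/
def Comonotonic (μ : Measure Ω) (X Y : Ω → ℝ) : Prop :=
  ∀ᵐ p ∂(μ.prod μ), 0 ≤ (X p.1 - X p.2) * (Y p.1 - Y p.2)

/-- `(X, Y)` is an exchangeable pair. -/
def Exchangeable (μ : Measure Ω) (X Y : Ω → ℝ) : Prop :=
  Measure.map (fun ω => (X ω, Y ω)) μ = Measure.map (fun ω => (Y ω, X ω)) μ

/-- `(X, Y)` is negatively quadrant dependent. -/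
def NQD (μ : Measure Ω) (X Y : Ω → ℝ) : Prop :=
  ∀ x y : ℝ, μ {ω | X ω ≤ x ∧ Y ω ≤ y} ≤ μ {ω | X ω ≤ x} * μ {ω | Y ω ≤ y}

/-- `X` dominates `Y` in the concave order. -/
def ConcaveOrdGE (μ : Measure Ω) (X Y : Ω → ℝ) : Prop :=
  ∀ u : ℝ → ℝ, ConcaveOn ℝ Set.univ u → (∫ ω, u (Y ω) ∂μ) ≤ ∫ ω, u (X ω) ∂μ

/-- The left quantile function `Q_X(t) = inf {x | P(X ≤ x) ≥ t}`. -/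
noncomputable def leftQuantile (μ : Measure Ω) (X : Ω → ℝ) (t : ℝ) : ℝ :=
  sInf {x : ℝ | t ≤ (μ {ω | X ω ≤ x}).toReal}

/-- The essential supremum `inf {x | P(Z > x) = 0}`. -/
noncomputable def essSupR (μ : Measure Ω) (Z : Ω → ℝ) : ℝ :=
  sInf {x : ℝ | μ {ω | x < Z ω} = 0}

/-- The essential infimum `sup {x | P(Z < x) = 0}`. -/
noncomputable def essInfR (μ : Measure Ω) (Z : Ω → ℝ) : ℝ :=
  sSup {x : ℝ | μ {ω | Z ω < x} = 0}

/-- The constant random variable `c`, as an element of `L^∞`. -/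
noncomputable def constLp (μ : Measure Ω) [IsFiniteMeasure μ] (c : ℝ) : Lp ℝ ∞ μ :=
  (memLp_const c).toLp (fun _ => c)

variable (μ : Measure Ω) [IsFiniteMeasure μ] (R : Lp ℝ ∞ μ → Lp ℝ ∞ μ → Prop)

/-- The relation is transitive. -/
def IsTrans' : Prop := ∀ X Y Z : Lp ℝ ∞ μ, R X Y → R Y Z → R X Z

/-- Law invariance: identically distributed payoffs are indifferent. -/
def LawInvariant : Prop :=
  ∀ X Y : Lp ℝ ∞ μ, SameDist μ (X : Ω → ℝ) (Y : Ω → ℝ) → R X Y ∧ R Y X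

/-- Upper semicontinuity: upper contour sets are `L^∞`-norm closed. -/
def NormUSC : Prop := ∀ X : Lp ℝ ∞ μ, IsClosed {Y : Lp ℝ ∞ μ | R Y X}

/-- Continuity: upper and lower contour sets are `L^∞`-norm closed. -/
def NormContinuous : Prop :=
  ∀ X : Lp ℝ ∞ μ, IsClosed {Y : Lp ℝ ∞ μ | R Y X} ∧ IsClosed {Y : Lp ℝ ∞ μ | R X Y}

/-- A set of `L^∞` payoffs is closed under bounded convergence (uniformly
bounded sequences converging almost surely). -/
def BddConvClosed (S : Set (Lp ℝ ∞ μ)) : Prop :=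
  ∀ (Y : ℕ → Lp ℝ ∞ μ) (Z : Lp ℝ ∞ μ), (∀ n, Y n ∈ S) →
    (∃ C : ℝ, ∀ n, ‖Y n‖ ≤ C) →
    (∀ᵐ ω ∂μ, Tendsto (fun n => (Y n : Ω → ℝ) ω) atTop (nhds ((Z : Ω → ℝ) ω))) →
    Z ∈ S

/-- Compact upper semicontinuity. -/
def CompactUSC : Prop := ∀ X : Lp ℝ ∞ μ, BddConvClosed μ {Y : Lp ℝ ∞ μ | R Y X}

/-- Compact continuity. -/
def CompactCont : Prop :=
  ∀ X : Lp ℝ ∞ μ,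
    BddConvClosed μ {Y : Lp ℝ ∞ μ | R Y X} ∧ BddConvClosed μ {Y : Lp ℝ ∞ μ | R X Y}

/-- Diversification on the class of pairs satisfying `P`. -/
def DiversificationOn (P : Lp ℝ ∞ μ → Lp ℝ ∞ μ → Prop) : Prop :=
  ∀ X Y : Lp ℝ ∞ μ, P X Y → R X Y → R Y X →
    ∀ l : ℝ, 0 ≤ l → l ≤ 1 → R (l • X + (1 - l) • Y) Y

/-- Anti-diversification on the class of pairs satisfying `P`. -/
def AntiDiversificationOn (P : Lp ℝ ∞ μ → Lp ℝ ∞ μ → Prop) : Prop :=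
  ∀ X Y : Lp ℝ ∞ μ, P X Y → R X Y → R Y X →
    ∀ l : ℝ, 0 ≤ l → l ≤ 1 → R X (l • X + (1 - l) • Y)

/-- Diversification neutrality on the class of pairs satisfying `P`. -/
def DiversificationNeutralOn (P : Lp ℝ ∞ μ → Lp ℝ ∞ μ → Prop) : Prop :=
  DiversificationOn μ R P ∧ AntiDiversificationOn μ R P

/-- Weak risk aversion: `E[X] ≿ X`. -/
def WeakRiskAverse : Prop :=
  ∀ X : Lp ℝ ∞ μ, R (constLp μ (∫ ω, (X : Ω → ℝ) ω ∂μ)) X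

/-- Strong risk aversion: `X ≥_cv Y` implies `X ≿ Y`. -/
def StrongRiskAverse : Prop :=
  ∀ X Y : Lp ℝ ∞ μ, ConcaveOrdGE μ (X : Ω → ℝ) (Y : Ω → ℝ) → R X Y

/-- Risk neutrality: `E[X] ≃ X`. -/
def RiskNeutral : Prop :=
  ∀ X : Lp ℝ ∞ μ, R (constLp μ (∫ ω, (X : Ω → ℝ) ω ∂μ)) X ∧
    R X (constLp μ (∫ ω, (X : Ω → ℝ) ω ∂μ))

end Defs

section LLNProofAux
open Set

lemma rcont (c p : ℝ) (hp : 0 ≤ p) : Continuous fun x : ℝ => |x - c| ^ p := by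
  rw [continuous_iff_continuousAt]
  intro x
  exact (continuous_abs.comp (continuous_sub_right c)).continuousAt.rpow_const (Or.inr hp)

lemma rmid {p : ℝ} (hp : 1 ≤ p) (c a b : ℝ) :
    |(a + b) / 2 - c| ^ p ≤ (|a - c| ^ p + |b - c| ^ p) / 2 := by
  set u := |a - c| with hu
  set v := |b - c| with hv
  have h1 : |(a + b) / 2 - c| ≤ (u + v) / 2 := by
    have : (a + b) / 2 - c = ((a - c) + (b - c)) / 2 := by ring
    rw [this, abs_div, abs_two]
    gcongr
    exact abs_add_le _ _
  have h2 : |(a + b) / 2 - c| ^ p ≤ ((u + v) / 2) ^ p :=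
    Real.rpow_le_rpow (abs_nonneg _) h1 (by linarith)
  have h3 : ((u + v) / 2) ^ p ≤ (u ^ p + v ^ p) / 2 := by
    have := (convexOn_rpow hp).2 (mem_Ici.2 (abs_nonneg (a - c)))
      (mem_Ici.2 (abs_nonneg (b - c))) (by norm_num : (0:ℝ) ≤ 1/2) (by norm_num : (0:ℝ) ≤ 1/2)
      (by norm_num)
    simp only [smul_eq_mul] at this
    calc ((u + v) / 2) ^ p = (1/2 * u + 1/2 * v) ^ p := by ring_nf
      _ ≤ 1/2 * u ^ p + 1/2 * v ^ p := this
      _ = (u ^ p + v ^ p) / 2 := by ring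
  linarith

lemma rgain {p : ℝ} (hp : 1 ≤ p) {c s a b : ℝ} (hs : 0 < s) (ha : a ≤ c - s) (hb : c + s < b) :
    s ^ p / 2 ≤ (|a - c| ^ p + |b - c| ^ p) / 2 - |(a + b) / 2 - c| ^ p := by
  set u := c - a with hudef
  set v := b - c with hvdef
  have hus : s ≤ u := by simp [hudef]; linarith
  have hvs : s ≤ v := by simp [hvdef]; linarith
  set L := max u v with hL
  have hsL : s ≤ L := hus.trans (le_max_left _ _)
  have habs1 : |a - c| = u := by rw [abs_of_nonpos (by linarith)]; ring
  have habs2 : |b - c| = v := abs_of_nonneg (by linarith)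
  have hmid : |(a + b) / 2 - c| ≤ (L - s) / 2 := by
    have : (a + b) / 2 - c = (v - u) / 2 := by simp [hudef, hvdef]; ring
    rw [this, abs_div, abs_two]
    rw [div_le_div_iff_of_pos_right (by norm_num : (0:ℝ) < 2)]
    rcases le_total u v with h | h
    · rw [abs_of_nonneg (by linarith)]
      have : L = v := max_eq_right h
      linarith
    · rw [abs_of_nonpos (by linarith)]
      have : L = u := max_eq_left h
      linarith
  have h2 : |(a + b) / 2 - c| ^ p ≤ ((L - s) / 2) ^ p :=
    Real.rpow_le_rpow (abs_nonneg _) hmid (by linarith)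
  have h3 : ((L - s) / 2) ^ p = (L - s) ^ p / 2 ^ p := Real.div_rpow (by linarith) (by norm_num : (0:ℝ) ≤ 2) p
  have h4 : (2:ℝ) ≤ 2 ^ p := by
    calc (2:ℝ) = 2 ^ (1:ℝ) := (Real.rpow_one 2).symm
    _ ≤ 2 ^ p := Real.rpow_le_rpow_of_exponent_le (by norm_num) hp
  have h5 : (L - s) ^ p / 2 ^ p ≤ (L - s) ^ p / 2 := by
    have hnn : 0 ≤ (L - s) ^ p := Real.rpow_nonneg (by linarith) p
    gcongr
  have h6 : (L - s) ^ p ≤ L ^ p :=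
    Real.rpow_le_rpow (by linarith) (by linarith) (by linarith)
  have h7 : L ^ p + s ^ p ≤ u ^ p + v ^ p := by
    rcases le_total u v with h | h
    · have hLv : L = v := max_eq_right h
      have : s ^ p ≤ u ^ p := Real.rpow_le_rpow (le_of_lt hs) hus (by linarith)
      rw [hLv]; linarith
    · have hLu : L = u := max_eq_left h
      have : s ^ p ≤ v ^ p := Real.rpow_le_rpow (le_of_lt hs) hvs (by linarith)
      rw [hLu]; linarith
  rw [habs1, habs2]
  have h8 : |(a + b) / 2 - c| ^ p ≤ (L - s) ^ p / 2 := h2.trans (h3 ▸ h5)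
  linarith

lemma rmaxmid (K : ℝ) {t u v : ℝ} (h : t ≤ (u + v) / 2) :
    max (t - K) 0 ≤ (max (u - K) 0 + max (v - K) 0) / 2 := by
  apply max_le
  · have : t - K ≤ ((u - K) + (v - K)) / 2 := by linarith
    have h2 : (u - K) ≤ max (u - K) 0 := le_max_left _ _
    have h3 : (v - K) ≤ max (v - K) 0 := le_max_left _ _
    linarith
  · positivity

lemma rtrunc {p : ℝ} (hp : 1 ≤ p) {K : ℝ} (hK : 0 ≤ K) (z : ℝ) :
    |z| ^ p ≤ 2 * max (|z| ^ p - K) 0 + (1 + 2 * K) * |z| := by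
  have hz0 : 0 ≤ |z| := abs_nonneg z
  have hm0 : 0 ≤ max (|z| ^ p - K) 0 := le_max_right _ _
  rcases le_total (|z| ^ p) (2 * K) with h | h
  · rcases le_total (|z|) 1 with h1 | h1
    · have : |z| ^ p ≤ |z| := by
        rcases eq_or_lt_of_le hz0 with h0 | h0
        · rw [← h0, Real.zero_rpow (by linarith)]
        · calc |z| ^ p ≤ |z| ^ (1:ℝ) :=
            Real.rpow_le_rpow_of_exponent_ge h0 h1 hp
          _ = |z| := Real.rpow_one _
      nlinarith
    · nlinarith
  · have : max (|z| ^ p - K) 0 = |z| ^ p - K := max_eq_left (by linarith)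
    nlinarith
open MeasureTheory Filter Set

section Aux
variable {Ω : Type*} [MeasurableSpace Ω] {μ : Measure Ω}

lemma sd_integral {A B : Ω → ℝ} (hA : AEMeasurable A μ) (hB : AEMeasurable B μ)
    (h : SameDist μ A B) {f : ℝ → ℝ} (hf : Continuous f) :
    ∫ ω, f (A ω) ∂μ = ∫ ω, f (B ω) ∂μ := by
  rw [← integral_map hA hf.aestronglyMeasurable, h, integral_map hB hf.aestronglyMeasurable]

lemma sd_integrable {A B : Ω → ℝ} (hA : AEMeasurable A μ) (hB : AEMeasurable B μ)
    (h : SameDist μ A B) {f : ℝ → ℝ} (hf : Continuous f)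
    (hint : Integrable (fun ω => f (B ω)) μ) : Integrable (fun ω => f (A ω)) μ := by
  have h1 : Integrable f (Measure.map A μ) := by
    rw [h]
    exact (integrable_map_measure hf.aestronglyMeasurable hB).2 hint
  exact (integrable_map_measure hf.aestronglyMeasurable hA).1 h1

lemma sd_measure_Iic {A B : Ω → ℝ} (hA : AEMeasurable A μ) (hB : AEMeasurable B μ)
    (h : SameDist μ A B) (x : ℝ) : μ {ω | A ω ≤ x} = μ {ω | B ω ≤ x} := by
  have e1 : {ω | A ω ≤ x} = A ⁻¹' (Iic x) := rfl
  have e2 : {ω | B ω ≤ x} = B ⁻¹' (Iic x) := rfl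
  rw [e1, e2, ← Measure.map_apply_of_aemeasurable hA measurableSet_Iic,
    ← Measure.map_apply_of_aemeasurable hB measurableSet_Iic, h]

lemma sd_measure_Ioi {A B : Ω → ℝ} (hA : AEMeasurable A μ) (hB : AEMeasurable B μ)
    (h : SameDist μ A B) (x : ℝ) : μ {ω | x < A ω} = μ {ω | x < B ω} := by
  have e1 : {ω | x < A ω} = A ⁻¹' (Ioi x) := rfl
  have e2 : {ω | x < B ω} = B ⁻¹' (Ioi x) := rfl
  rw [e1, e2, ← Measure.map_apply_of_aemeasurable hA measurableSet_Ioi,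
    ← Measure.map_apply_of_aemeasurable hB measurableSet_Ioi, h]

end Aux

section Aux2
variable {Ω : Type*} [MeasurableSpace Ω] {μ : Measure Ω} [IsProbabilityMeasure μ]

/-- NQD lower bound on the "opposite quadrant". -/
lemma nqd_quadrant {A B : Ω → ℝ} (hA : AEMeasurable A μ) (hB : AEMeasurable B μ)
    (hNQD : NQD μ A B) (x y : ℝ) :
    (μ {ω | A ω ≤ x}).toReal * (μ {ω | y < B ω}).toReal
      ≤ (μ ({ω | A ω ≤ x} ∩ {ω | y < B ω})).toReal := by
  set S := {ω | A ω ≤ x} with hS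
  set T := {ω | B ω ≤ y} with hT
  have hTc : {ω | y < B ω} = Tᶜ := by ext ω; simp [hT, not_le]
  have hTnull : NullMeasurableSet T μ := hB.nullMeasurable measurableSet_Iic
  have h1 : μ (S ∩ T) + μ (S \ T) = μ S := measure_inter_add_diff₀ S hTnull
  have h2 : μ T + μ Tᶜ = 1 := by
    have := measure_inter_add_diff₀ (μ := μ) univ hTnull
    simpa [Set.univ_inter, Set.diff_eq, measure_univ] using this
  have h3 : μ (S ∩ T) ≤ μ S * μ T := by
    have := hNQD x y
    have e : {ω | A ω ≤ x ∧ B ω ≤ y} = S ∩ T := rfl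
    rwa [e] at this
  have hd : S \ T = S ∩ Tᶜ := Set.diff_eq S T
  -- pass to real numbers
  set F := (μ S).toReal
  set G := (μ T).toReal
  set P1 := (μ (S ∩ T)).toReal
  set P2 := (μ (S ∩ Tᶜ)).toReal
  set H := (μ Tᶜ).toReal
  have r1 : P1 + P2 = F := by
    rw [← ENNReal.toReal_add (measure_ne_top μ _) (measure_ne_top μ _), ← hd, h1]
  have r2 : G + H = 1 := by
    rw [← ENNReal.toReal_add (measure_ne_top μ _) (measure_ne_top μ _), h2]; simp
  have r3 : P1 ≤ F * G := by
    rw [← ENNReal.toReal_mul]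
    exact ENNReal.toReal_mono (ENNReal.mul_ne_top (measure_ne_top μ _) (measure_ne_top μ _)) h3
  have hF : 0 ≤ F := ENNReal.toReal_nonneg
  rw [hTc]
  nlinarith [ENNReal.toReal_nonneg (a := μ (S ∩ Tᶜ))]

end Aux2

section Aux3
variable {Ω : Type*} [MeasurableSpace Ω] {μ : Measure Ω} [IsProbabilityMeasure μ]

lemma gain_lemma {p : ℝ} (hp : 1 ≤ p) (c : ℝ) {s : ℝ} (hs : 0 < s)
    {Y A B : Ω → ℝ} (hY : AEMeasurable Y μ) (hA : AEMeasurable A μ) (hB : AEMeasurable B μ)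
    (hAY : SameDist μ A Y) (hBY : SameDist μ B Y) (hNQD : NQD μ A B)
    (hint : Integrable (fun ω => |Y ω - c| ^ p) μ) :
    s ^ p / 2 * ((μ {ω | Y ω ≤ c - s}).toReal * (μ {ω | c + s < Y ω}).toReal)
      ≤ (∫ ω, |Y ω - c| ^ p ∂μ) - ∫ ω, |(A ω + B ω) / 2 - c| ^ p ∂μ := by
  have hfc : Continuous fun x : ℝ => |x - c| ^ p := rcont c p (by linarith)
  have hfA : Integrable (fun ω => |A ω - c| ^ p) μ := sd_integrable hA hY hAY hfc hint
  have hfB : Integrable (fun ω => |B ω - c| ^ p) μ := sd_integrable hB hY hBY hfc hint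
  have hMm : AEMeasurable (fun ω => (A ω + B ω) / 2) μ := (hA.add hB).div_const 2
  have havg : Integrable (fun ω => (|A ω - c| ^ p + |B ω - c| ^ p) / 2) μ :=
    (hfA.add hfB).div_const 2
  have hfM : Integrable (fun ω => |(A ω + B ω) / 2 - c| ^ p) μ := by
    apply Integrable.mono' havg (hfc.measurable.comp_aemeasurable hMm).aestronglyMeasurable
    filter_upwards with ω
    simp only [Function.comp_apply, Real.norm_eq_abs,
      abs_of_nonneg (Real.rpow_nonneg (abs_nonneg _) p)]
    exact rmid hp c (A ω) (B ω)
  have hgint : Integrable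
      (fun ω => (|A ω - c| ^ p + |B ω - c| ^ p) / 2 - |(A ω + B ω) / 2 - c| ^ p) μ :=
    havg.sub hfM
  have hgeq : (∫ ω, ((|A ω - c| ^ p + |B ω - c| ^ p) / 2 - |(A ω + B ω) / 2 - c| ^ p) ∂μ)
      = (∫ ω, |Y ω - c| ^ p ∂μ) - ∫ ω, |(A ω + B ω) / 2 - c| ^ p ∂μ := by
    rw [integral_sub havg hfM]
    congr 1
    rw [integral_div, integral_add hfA hfB,
      sd_integral hA hY hAY hfc, sd_integral hB hY hBY hfc]
    ring
  set E : Set Ω := {ω | A ω ≤ c - s} ∩ {ω | s + c < B ω} with hE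
  have hEnull : NullMeasurableSet E μ :=
    (hA.nullMeasurable measurableSet_Iic).inter (hB.nullMeasurable measurableSet_Ioi)
  obtain ⟨E', hE'sub, hE'meas, hE'ae⟩ := hEnull.exists_measurable_subset_ae_eq
  have hind : ∀ ω, E'.indicator (fun _ => s ^ p / 2) ω
      ≤ (|A ω - c| ^ p + |B ω - c| ^ p) / 2 - |(A ω + B ω) / 2 - c| ^ p := by
    intro ω
    by_cases hω : ω ∈ E'
    · rw [Set.indicator_of_mem hω]
      obtain ⟨h1, h2⟩ := hE'sub hω
      have hb : c + s < B ω := by have := h2; simp only [Set.mem_setOf_eq] at this; linarith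
      exact rgain hp hs h1 hb
    · rw [Set.indicator_of_notMem hω]
      have := rmid hp c (A ω) (B ω)
      linarith
  have hintE : ∫ ω, E'.indicator (fun _ => s ^ p / 2) ω ∂μ = s ^ p / 2 * (μ E').toReal := by
    rw [integral_indicator_const _ hE'meas]
    simp [mul_comm, measureReal_def]
  have hmono : ∫ ω, E'.indicator (fun _ => s ^ p / 2) ω ∂μ
      ≤ ∫ ω, ((|A ω - c| ^ p + |B ω - c| ^ p) / 2 - |(A ω + B ω) / 2 - c| ^ p) ∂μ := by
    apply integral_mono_of_nonneg _ hgint (Filter.Eventually.of_forall hind)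
    filter_upwards with ω
    exact Set.indicator_nonneg (fun _ _ => by positivity) ω
  have hmeasE : μ E' = μ E := measure_congr hE'ae
  have hquad : (μ {ω | A ω ≤ c - s}).toReal * (μ {ω | s + c < B ω}).toReal ≤ (μ E).toReal :=
    nqd_quadrant hA hB hNQD (c - s) (s + c)
  have hma : μ {ω | A ω ≤ c - s} = μ {ω | Y ω ≤ c - s} := sd_measure_Iic hA hY hAY _
  have hmb : μ {ω | s + c < B ω} = μ {ω | c + s < Y ω} := by
    rw [sd_measure_Ioi hB hY hBY (s + c)]
    norm_num [add_comm]
  calc s ^ p / 2 * ((μ {ω | Y ω ≤ c - s}).toReal * (μ {ω | c + s < Y ω}).toReal)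
      = s ^ p / 2 * ((μ {ω | A ω ≤ c - s}).toReal * (μ {ω | s + c < B ω}).toReal) := by
        rw [hma, hmb]
    _ ≤ s ^ p / 2 * (μ E).toReal := by
        apply mul_le_mul_of_nonneg_left hquad
        positivity
    _ = s ^ p / 2 * (μ E').toReal := by rw [hmeasE]
    _ = ∫ ω, E'.indicator (fun _ => s ^ p / 2) ω ∂μ := hintE.symm
    _ ≤ ∫ ω, ((|A ω - c| ^ p + |B ω - c| ^ p) / 2 - |(A ω + B ω) / 2 - c| ^ p) ∂μ := hmono
    _ = _ := hgeq

end Aux3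

section Aux4
variable {Ω : Type*} [MeasurableSpace Ω] {μ : Measure Ω} [IsProbabilityMeasure μ]

lemma dom_lemma {X : Ω → ℝ} (hXm : AEMeasurable X μ)
    {Xs : ℕ → Ω → ℝ} (hXsm : ∀ n, AEMeasurable (Xs n) μ)
    (h0 : SameDist μ (Xs 0) X)
    (hrec : ∀ n : ℕ, ∃ A B : Ω → ℝ, AEMeasurable A μ ∧ AEMeasurable B μ ∧
      SameDist μ A (Xs n) ∧ SameDist μ B (Xs n) ∧ NQD μ A B ∧
      Xs (n + 1) = fun ω => (A ω + B ω) / 2)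
    {f : ℝ → ℝ} (hfc : Continuous f) (hf0 : ∀ x, 0 ≤ f x)
    (hmid : ∀ a b, f ((a + b) / 2) ≤ (f a + f b) / 2)
    (hfX : Integrable (fun ω => f (X ω)) μ) :
    ∀ n, Integrable (fun ω => f (Xs n ω)) μ ∧ ∫ ω, f (Xs n ω) ∂μ ≤ ∫ ω, f (X ω) ∂μ := by
  intro n
  induction n with
  | zero =>
    exact ⟨sd_integrable (hXsm 0) hXm h0 hfc hfX,
      le_of_eq (sd_integral (hXsm 0) hXm h0 hfc)⟩
  | succ n ih =>
    obtain ⟨A, B, hA, hB, hAY, hBY, _, heq⟩ := hrec n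
    have hfA : Integrable (fun ω => f (A ω)) μ := sd_integrable hA (hXsm n) hAY hfc ih.1
    have hfB : Integrable (fun ω => f (B ω)) μ := sd_integrable hB (hXsm n) hBY hfc ih.1
    have havg : Integrable (fun ω => (f (A ω) + f (B ω)) / 2) μ := (hfA.add hfB).div_const 2
    have hMm : AEMeasurable (fun ω => (A ω + B ω) / 2) μ := (hA.add hB).div_const 2
    have hintM : Integrable (fun ω => f ((A ω + B ω) / 2)) μ := by
      apply Integrable.mono' havg (hfc.measurable.comp_aemeasurable hMm).aestronglyMeasurable
      filter_upwards with ω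
      simp only [Function.comp_apply, Real.norm_eq_abs, abs_of_nonneg (hf0 _)]
      exact hmid (A ω) (B ω)
    constructor
    · rw [heq]
      exact hintM
    · rw [heq]
      calc ∫ ω, f ((A ω + B ω) / 2) ∂μ
          ≤ ∫ ω, (f (A ω) + f (B ω)) / 2 ∂μ :=
            integral_mono hintM havg (fun ω => hmid (A ω) (B ω))
        _ = ((∫ ω, f (A ω) ∂μ) + ∫ ω, f (B ω) ∂μ) / 2 := by
            rw [integral_div, integral_add hfA hfB]
        _ = ∫ ω, f (Xs n ω) ∂μ := by
            rw [sd_integral hA (hXsm n) hAY hfc, sd_integral hB (hXsm n) hBY hfc]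
            ring
        _ ≤ ∫ ω, f (X ω) ∂μ := ih.2

lemma mean_lemma {X : Ω → ℝ} (hXm : AEMeasurable X μ) (hXint : Integrable X μ)
    {Xs : ℕ → Ω → ℝ} (hXsm : ∀ n, AEMeasurable (Xs n) μ)
    (h0 : SameDist μ (Xs 0) X)
    (hrec : ∀ n : ℕ, ∃ A B : Ω → ℝ, AEMeasurable A μ ∧ AEMeasurable B μ ∧
      SameDist μ A (Xs n) ∧ SameDist μ B (Xs n) ∧ NQD μ A B ∧
      Xs (n + 1) = fun ω => (A ω + B ω) / 2) :
    ∀ n, Integrable (Xs n) μ ∧ ∫ ω, Xs n ω ∂μ = ∫ ω, X ω ∂μ := by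
  intro n
  induction n with
  | zero =>
    exact ⟨sd_integrable (hXsm 0) hXm h0 continuous_id hXint,
      sd_integral (hXsm 0) hXm h0 continuous_id⟩
  | succ n ih =>
    obtain ⟨A, B, hA, hB, hAY, hBY, _, heq⟩ := hrec n
    have hfA : Integrable A μ := sd_integrable hA (hXsm n) hAY continuous_id ih.1
    have hfB : Integrable B μ := sd_integrable hB (hXsm n) hBY continuous_id ih.1
    constructor
    · rw [heq]
      exact (hfA.add hfB).div_const 2
    · rw [heq]
      calc ∫ ω, (A ω + B ω) / 2 ∂μ = ((∫ ω, A ω ∂μ) + ∫ ω, B ω ∂μ) / 2 := by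
            rw [integral_div, integral_add hfA hfB]
        _ = ∫ ω, X ω ∂μ := by
            have hiA : ∫ ω, A ω ∂μ = ∫ ω, Xs n ω ∂μ :=
              sd_integral hA (hXsm n) hAY continuous_id
            have hiB : ∫ ω, B ω ∂μ = ∫ ω, Xs n ω ∂μ :=
              sd_integral hB (hXsm n) hBY continuous_id
            rw [hiA, hiB, ih.2]
            ring

end Aux4

section Aux5
variable {Ω : Type*} [MeasurableSpace Ω] {μ : Measure Ω} [IsProbabilityMeasure μ]

lemma rtri (c a b : ℝ) : |(a + b) / 2 - c| ≤ (|a - c| + |b - c|) / 2 := by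
  have : (a + b) / 2 - c = ((a - c) + (b - c)) / 2 := by ring
  rw [this, abs_div, abs_two]
  gcongr
  exact abs_add_le _ _

lemma rbound {p : ℝ} (hp : 1 ≤ p) (x c : ℝ) : |x - c| ^ p ≤ 2 ^ p * (|x| ^ p + |c| ^ p) := by
  have h1 : |x - c| ≤ 2 * max |x| |c| := by
    have := abs_sub x c
    have h2 : |x| ≤ max |x| |c| := le_max_left _ _
    have h3 : |c| ≤ max |x| |c| := le_max_right _ _
    calc |x - c| ≤ |x| + |c| := abs_sub _ _
      _ ≤ 2 * max |x| |c| := by linarith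
  have h2 : |x - c| ^ p ≤ (2 * max |x| |c|) ^ p :=
    Real.rpow_le_rpow (abs_nonneg _) h1 (by linarith)
  have h3 : (2 * max |x| |c|) ^ p = 2 ^ p * (max |x| |c|) ^ p :=
    Real.mul_rpow (by norm_num) (le_max_of_le_left (abs_nonneg x))
  have h4 : (max |x| |c|) ^ p ≤ |x| ^ p + |c| ^ p := by
    rcases max_cases (|x|) (|c|) with ⟨h, _⟩ | ⟨h, _⟩ <;> rw [h]
    · nlinarith [Real.rpow_nonneg (abs_nonneg c) p]
    · nlinarith [Real.rpow_nonneg (abs_nonneg x) p]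
  calc |x - c| ^ p ≤ 2 ^ p * (max |x| |c|) ^ p := by rw [← h3]; exact h2
    _ ≤ 2 ^ p * (|x| ^ p + |c| ^ p) := by
        have : (0:ℝ) ≤ 2 ^ p := Real.rpow_nonneg (by norm_num) p
        nlinarith

lemma min_le_sqrt {a b : ℝ} (ha : 0 ≤ a) (hb : 0 ≤ b) : min a b ≤ Real.sqrt (a * b) := by
  rcases le_total a b with h | h
  · rw [min_eq_left h]
    calc a = Real.sqrt (a * a) := (Real.sqrt_mul_self ha).symm
      _ ≤ Real.sqrt (a * b) := Real.sqrt_le_sqrt (by nlinarith)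
  · rw [min_eq_right h]
    calc b = Real.sqrt (b * b) := (Real.sqrt_mul_self hb).symm
      _ ≤ Real.sqrt (a * b) := Real.sqrt_le_sqrt (by nlinarith)

lemma dct_max {W : Ω → ℝ} (hW : AEMeasurable W μ) (h0 : ∀ ω, 0 ≤ W ω)
    (hint : Integrable W μ) :
    Tendsto (fun K : ℕ => ∫ ω, max (W ω - K) 0 ∂μ) atTop (nhds 0) := by
  have key := tendsto_integral_of_dominated_convergence (μ := μ)
    (F := fun (K : ℕ) ω => max (W ω - K) 0) (f := fun _ => (0:ℝ)) W
    (fun K => ((hW.sub aemeasurable_const).max aemeasurable_const).aestronglyMeasurable)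
    hint
    (fun K => by
      filter_upwards with ω
      rw [Real.norm_eq_abs, abs_of_nonneg (le_max_right _ _)]
      apply max_le _ (h0 ω)
      have : (0:ℝ) ≤ (K:ℝ) := Nat.cast_nonneg K
      linarith)
    (by
      filter_upwards with ω
      apply tendsto_atTop_of_eventually_const (i₀ := ⌈W ω⌉₊)
      intro K hK
      apply max_eq_right
      have : W ω ≤ (K:ℝ) := (Nat.le_ceil _).trans (Nat.cast_le.2 hK)
      linarith)
  simpa using key

end Aux5

end LLNProofAux


/-- `L^p` law of large numbers for negatively dependent
averaging: if `X₀ ∼ X` and each `Xₙ` is the average of an NQD pair of copies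
of `Xₙ₋₁`, then `Xₙ → E[X]` in `L^p`. -/
theorem lln_nqd_averaging
    {Ω : Type*} [MeasurableSpace Ω] (μ : Measure Ω) [IsProbabilityMeasure μ]
    (p : ℝ) (hp : 1 ≤ p)
    (X : Ω → ℝ) (hXm : AEMeasurable X μ)
    (hXp : Integrable (fun ω => |X ω| ^ p) μ)
    (Xs : ℕ → Ω → ℝ) (hXsm : ∀ n, AEMeasurable (Xs n) μ)
    (h0 : SameDist μ (Xs 0) X)
    (hrec : ∀ n : ℕ, ∃ A B : Ω → ℝ, AEMeasurable A μ ∧ AEMeasurable B μ ∧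
      SameDist μ A (Xs n) ∧ SameDist μ B (Xs n) ∧ NQD μ A B ∧
      Xs (n + 1) = fun ω => (A ω + B ω) / 2) :
    Tendsto (fun n => ∫ ω, |Xs n ω - ∫ ω', X ω' ∂μ| ^ p ∂μ) atTop (nhds 0) := by
  have hp0 : (0:ℝ) < p := lt_of_lt_of_le one_pos hp
  set m := ∫ ω', X ω' ∂μ with hm
  -- basic integrability
  have hXint : Integrable X μ := by
    apply Integrable.mono' ((integrable_const (1:ℝ)).add hXp) hXm.aestronglyMeasurable
    filter_upwards with ω
    simp only [Pi.add_apply, Real.norm_eq_abs]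
    rcases le_total (|X ω|) 1 with h | h
    · have : 0 ≤ |X ω| ^ p := Real.rpow_nonneg (abs_nonneg _) p
      linarith
    · have : |X ω| ≤ |X ω| ^ p := by
        calc |X ω| = |X ω| ^ (1:ℝ) := (Real.rpow_one _).symm
          _ ≤ |X ω| ^ p := Real.rpow_le_rpow_of_exponent_le h hp
      linarith
  have hf1c : Continuous fun x : ℝ => |x - m| ^ p := rcont m p hp0.le
  have hf1X : Integrable (fun ω => |X ω - m| ^ p) μ := by
    apply Integrable.mono' ((hXp.add (integrable_const (|m| ^ p))).const_mul (2 ^ p))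
      (hf1c.measurable.comp_aemeasurable hXm).aestronglyMeasurable
    filter_upwards with ω
    simp only [Function.comp_apply, Real.norm_eq_abs,
      abs_of_nonneg (Real.rpow_nonneg (abs_nonneg _) p)]
    exact rbound hp (X ω) m
  have habsZX : Integrable (fun ω => |X ω - m|) μ := (hXint.sub (integrable_const m)).abs
  -- key structural lemmas
  have hmean := mean_lemma hXm hXint hXsm h0 hrec
  have hdom1 := dom_lemma hXm hXsm h0 hrec hf1c
    (fun x => Real.rpow_nonneg (abs_nonneg _) p) (fun a b => rmid hp m a b) hf1X
  -- ψ_K family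
  have hpsid : ∀ K : ℝ, 0 ≤ K → ∀ n,
      Integrable (fun ω => max (|Xs n ω - m| - K) 0) μ ∧
      (∫ ω, max (|Xs n ω - m| - K) 0 ∂μ) ≤ ∫ ω, max (|X ω - m| - K) 0 ∂μ := by
    intro K hK
    apply dom_lemma hXm hXsm h0 hrec
      (((continuous_abs.comp (continuous_sub_right m)).sub continuous_const).max
        continuous_const)
      (fun x => le_max_right _ _)
      (fun a b => rmaxmid K (rtri m a b))
    · apply Integrable.mono' habsZX
      · exact ((((continuous_abs.comp (continuous_sub_right m)).sub
          continuous_const).max continuous_const).measurable.comp_aemeasurable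
          hXm).aestronglyMeasurable
      · filter_upwards with ω
        simp only [Function.comp_apply, Real.norm_eq_abs]
        rw [abs_of_nonneg (le_max_right _ _)]
        exact max_le (by simp only [Pi.sub_apply, Function.comp_apply]; linarith [abs_nonneg (X ω - m)]) (abs_nonneg _)
  -- φ_K family
  have hphid : ∀ K : ℝ, 0 ≤ K → ∀ n,
      Integrable (fun ω => max (|Xs n ω - m| ^ p - K) 0) μ ∧
      (∫ ω, max (|Xs n ω - m| ^ p - K) 0 ∂μ) ≤ ∫ ω, max (|X ω - m| ^ p - K) 0 ∂μ := by
    intro K hK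
    apply dom_lemma hXm hXsm h0 hrec ((hf1c.sub continuous_const).max continuous_const)
      (fun x => le_max_right _ _)
      (fun a b => rmaxmid K (rmid hp m a b))
    · apply Integrable.mono' hf1X
      · exact (((hf1c.sub continuous_const).max continuous_const).measurable.comp_aemeasurable
          hXm).aestronglyMeasurable
      · filter_upwards with ω
        simp only [Function.comp_apply, Real.norm_eq_abs]
        rw [abs_of_nonneg (le_max_right _ _)]
        exact max_le (by simp only [Pi.sub_apply]; linarith [Real.rpow_nonneg (abs_nonneg (X ω - m)) p])
          (Real.rpow_nonneg (abs_nonneg _) p)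
  -- the energy sequence
  set e : ℕ → ℝ := fun n => ∫ ω, |Xs n ω - m| ^ p ∂μ with he
  set a : ℕ → ℝ → ℝ := fun n s => (μ {ω | Xs n ω ≤ m - s}).toReal with ha
  set b : ℕ → ℝ → ℝ := fun n s => (μ {ω | m + s < Xs n ω}).toReal with hb
  have he0 : ∀ n, 0 ≤ e n := fun n =>
    integral_nonneg fun ω => Real.rpow_nonneg (abs_nonneg _) _
  have hgain : ∀ n, ∀ s : ℝ, 0 < s → s ^ p / 2 * (a n s * b n s) ≤ e n - e (n + 1) := by
    intro n s hs
    obtain ⟨A, B, hA, hB, hAY, hBY, hN, heq⟩ := hrec n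
    have key := gain_lemma hp m hs (hXsm n) hA hB hAY hBY hN (hdom1 n).1
    have h2 : e (n + 1) = ∫ ω, |(A ω + B ω) / 2 - m| ^ p ∂μ := by
      simp only [he, heq]
    have h1 : e n = ∫ ω, |Xs n ω - m| ^ p ∂μ := rfl
    rw [h1, h2]
    exact key
  have hmono : ∀ n, e (n + 1) ≤ e n := by
    intro n
    have h1 := hgain n 1 one_pos
    have h2 : 0 ≤ (1:ℝ) ^ p / 2 * (a n 1 * b n 1) := by
      apply mul_nonneg (by positivity)
      exact mul_nonneg ENNReal.toReal_nonneg ENNReal.toReal_nonneg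
    linarith
  have hconv : Filter.Tendsto e atTop (nhds (⨅ n, e n)) :=
    tendsto_atTop_ciInf (antitone_nat_of_succ_le hmono)
      ⟨0, fun x ⟨n, hn⟩ => hn ▸ he0 n⟩
  have hshift : Filter.Tendsto (fun n => e (n + 1)) atTop (nhds (⨅ n, e n)) :=
    hconv.comp (tendsto_add_atTop_nat 1)
  have hdiff : Filter.Tendsto (fun n => e n - e (n + 1)) atTop (nhds 0) := by
    simpa using hconv.sub hshift
  have hab : ∀ s : ℝ, 0 < s → Filter.Tendsto (fun n => a n s * b n s) atTop (nhds 0) := by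
    intro s hs
    have hc : (0:ℝ) < s ^ p / 2 := by positivity
    have h1 : Filter.Tendsto (fun n => s ^ p / 2 * (a n s * b n s)) atTop (nhds 0) := by
      apply squeeze_zero (fun n => ?_) (fun n => hgain n s hs) hdiff
      exact mul_nonneg hc.le (mul_nonneg ENNReal.toReal_nonneg ENNReal.toReal_nonneg)
    have h2 : (fun n => (s ^ p / 2)⁻¹ * (s ^ p / 2 * (a n s * b n s)))
        = fun n => a n s * b n s := by
      funext n
      field_simp
    rw [← h2]
    simpa using h1.const_mul (s ^ p / 2)⁻¹
  have hminab : ∀ s : ℝ, 0 < s →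
      Filter.Tendsto (fun n => min (a n s) (b n s)) atTop (nhds 0) := by
    intro s hs
    have hsq : Filter.Tendsto (fun n => Real.sqrt (a n s * b n s)) atTop (nhds 0) := by
      have := (Real.continuous_sqrt.tendsto 0).comp (hab s hs)
      simpa [Function.comp_def] using this
    apply squeeze_zero (fun n => le_min ENNReal.toReal_nonneg ENNReal.toReal_nonneg)
      (fun n => min_le_sqrt ENNReal.toReal_nonneg ENNReal.toReal_nonneg) hsq
  -- centered variables
  have hZint : ∀ n, Integrable (fun ω => Xs n ω - m) μ :=
    fun n => (hmean n).1.sub (integrable_const m)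
  have hZabs : ∀ n, Integrable (fun ω => |Xs n ω - m|) μ := fun n => (hZint n).abs
  have hZzero : ∀ n, ∫ ω, (Xs n ω - m) ∂μ = 0 := by
    intro n
    rw [integral_sub (hmean n).1 (integrable_const m), integral_const, (hmean n).2, ← hm]
    simp
  have hpos_int : ∀ n, Integrable (fun ω => max (Xs n ω - m) 0) μ :=
    fun n => (hZint n).pos_part
  have hneg_int : ∀ n, Integrable (fun ω => max (-(Xs n ω - m)) 0) μ :=
    fun n => (hZint n).neg.pos_part
  have hPN : ∀ n, ∫ ω, max (Xs n ω - m) 0 ∂μ = ∫ ω, max (-(Xs n ω - m)) 0 ∂μ := by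
    intro n
    have h1 : ∫ ω, (max (Xs n ω - m) 0 - max (-(Xs n ω - m)) 0) ∂μ = 0 := by
      have heq2 : (fun ω => max (Xs n ω - m) 0 - max (-(Xs n ω - m)) 0)
          = fun ω => Xs n ω - m := by
        funext ω
        rcases le_total (Xs n ω - m) 0 with h | h
        · rw [max_eq_right h, max_eq_left (by linarith)]; ring
        · rw [max_eq_left h, max_eq_right (by linarith)]; ring
      rw [heq2, hZzero n]
    rw [integral_sub (hpos_int n) (hneg_int n)] at h1
    linarith
  have habs_eq : ∀ n, ∫ ω, |Xs n ω - m| ∂μ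
      = (∫ ω, max (Xs n ω - m) 0 ∂μ) + ∫ ω, max (-(Xs n ω - m)) 0 ∂μ := by
    intro n
    rw [← integral_add (hpos_int n) (hneg_int n)]
    congr 1
    funext ω
    rcases le_total (Xs n ω - m) 0 with h | h
    · rw [abs_of_nonpos h, max_eq_right h, max_eq_left (by linarith)]; ring
    · rw [abs_of_nonneg h, max_eq_left h, max_eq_right (by linarith)]; ring
  -- one-sided expectation bounds
  have hside : ∀ n : ℕ, ∀ K : ℝ, 0 ≤ K → ∀ s : ℝ, 0 < s →
      ((∫ ω, max (-(Xs n ω - m)) 0 ∂μ)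
        ≤ s + (∫ ω, max (|X ω - m| - K) 0 ∂μ) + K * a n s)
      ∧ ((∫ ω, max (Xs n ω - m) 0 ∂μ)
        ≤ s + (∫ ω, max (|X ω - m| - K) 0 ∂μ) + K * b n s) := by
    intro n K hK s hs
    constructor
    · set E := toMeasurable μ {ω | Xs n ω ≤ m - s} with hEdef
      have hsub : {ω | Xs n ω ≤ m - s} ⊆ E := subset_toMeasurable _ _
      have hmeas : MeasurableSet E := measurableSet_toMeasurable _ _
      have hμE : μ E = μ {ω | Xs n ω ≤ m - s} := measure_toMeasurable _
      have hpoint : ∀ ω, max (-(Xs n ω - m)) 0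
          ≤ s + max (|Xs n ω - m| - K) 0 + E.indicator (fun _ => K) ω := by
        intro ω
        have h2 : (0:ℝ) ≤ max (|Xs n ω - m| - K) 0 := le_max_right _ _
        have h3 : |Xs n ω - m| ≤ max (|Xs n ω - m| - K) 0 + K := by
          have := le_max_left (|Xs n ω - m| - K) 0
          linarith
        by_cases h : Xs n ω ≤ m - s
        · rw [Set.indicator_of_mem (hsub h)]
          have h4 : -(Xs n ω - m) ≤ |Xs n ω - m| := neg_le_abs _
          apply max_le <;> linarith
        · have h5 : (0:ℝ) ≤ E.indicator (fun _ => K) ω :=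
            Set.indicator_nonneg (fun _ _ => hK) ω
          push_neg at h
          apply max_le <;> linarith
      have i1 : Integrable (fun ω => s + max (|Xs n ω - m| - K) 0) μ :=
        (integrable_const s).add (hpsid K hK n).1
      have i2 : Integrable
          (fun ω => s + max (|Xs n ω - m| - K) 0 + E.indicator (fun _ => K) ω) μ :=
        i1.add ((integrable_const K).indicator hmeas)
      calc ∫ ω, max (-(Xs n ω - m)) 0 ∂μ
          ≤ ∫ ω, (s + max (|Xs n ω - m| - K) 0 + E.indicator (fun _ => K) ω) ∂μ :=
            integral_mono (hneg_int n) i2 hpoint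
        _ = s + (∫ ω, max (|Xs n ω - m| - K) 0 ∂μ) + K * a n s := by
            rw [integral_add i1 ((integrable_const K).indicator hmeas),
              integral_add (integrable_const s) (hpsid K hK n).1,
              integral_const, integral_indicator_const _ hmeas]
            simp [hμE, ha, mul_comm, measureReal_def]
        _ ≤ s + (∫ ω, max (|X ω - m| - K) 0 ∂μ) + K * a n s := by
            have := (hpsid K hK n).2
            linarith
    · set E := toMeasurable μ {ω | m + s < Xs n ω} with hEdef
      have hsub : {ω | m + s < Xs n ω} ⊆ E := subset_toMeasurable _ _
      have hmeas : MeasurableSet E := measurableSet_toMeasurable _ _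
      have hμE : μ E = μ {ω | m + s < Xs n ω} := measure_toMeasurable _
      have hpoint : ∀ ω, max (Xs n ω - m) 0
          ≤ s + max (|Xs n ω - m| - K) 0 + E.indicator (fun _ => K) ω := by
        intro ω
        have h2 : (0:ℝ) ≤ max (|Xs n ω - m| - K) 0 := le_max_right _ _
        have h3 : |Xs n ω - m| ≤ max (|Xs n ω - m| - K) 0 + K := by
          have := le_max_left (|Xs n ω - m| - K) 0
          linarith
        by_cases h : m + s < Xs n ω
        · rw [Set.indicator_of_mem (hsub h)]
          have h4 : Xs n ω - m ≤ |Xs n ω - m| := le_abs_self _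
          apply max_le <;> linarith
        · have h5 : (0:ℝ) ≤ E.indicator (fun _ => K) ω :=
            Set.indicator_nonneg (fun _ _ => hK) ω
          push_neg at h
          apply max_le <;> linarith
      have i1 : Integrable (fun ω => s + max (|Xs n ω - m| - K) 0) μ :=
        (integrable_const s).add (hpsid K hK n).1
      have i2 : Integrable
          (fun ω => s + max (|Xs n ω - m| - K) 0 + E.indicator (fun _ => K) ω) μ :=
        i1.add ((integrable_const K).indicator hmeas)
      calc ∫ ω, max (Xs n ω - m) 0 ∂μ
          ≤ ∫ ω, (s + max (|Xs n ω - m| - K) 0 + E.indicator (fun _ => K) ω) ∂μ :=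
            integral_mono (hpos_int n) i2 hpoint
        _ = s + (∫ ω, max (|Xs n ω - m| - K) 0 ∂μ) + K * b n s := by
            rw [integral_add i1 ((integrable_const K).indicator hmeas),
              integral_add (integrable_const s) (hpsid K hK n).1,
              integral_const, integral_indicator_const _ hmeas]
            simp [hμE, hb, mul_comm, measureReal_def]
        _ ≤ s + (∫ ω, max (|X ω - m| - K) 0 ∂μ) + K * b n s := by
            have := (hpsid K hK n).2
            linarith
  -- dominated convergence of the truncation errors
  have hpsiT : Filter.Tendsto (fun K : ℕ => ∫ ω, max (|X ω - m| - K) 0 ∂μ)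
      atTop (nhds 0) :=
    dct_max (continuous_abs.measurable.comp_aemeasurable (hXm.sub aemeasurable_const))
      (fun ω => abs_nonneg _) habsZX
  have hphiT : Filter.Tendsto (fun K : ℕ => ∫ ω, max (|X ω - m| ^ p - K) 0 ∂μ)
      atTop (nhds 0) :=
    dct_max (hf1c.measurable.comp_aemeasurable hXm)
      (fun ω => Real.rpow_nonneg (abs_nonneg _) p) hf1X
  -- L¹ convergence of Xs n to m
  have hZto : Filter.Tendsto (fun n => ∫ ω, |Xs n ω - m| ∂μ) atTop (nhds 0) := by
    rw [Metric.tendsto_atTop]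
    intro ε hε
    obtain ⟨K, hKlt⟩ :=
      (hpsiT.eventually (gt_mem_nhds (show (0:ℝ) < ε/8 by linarith))).exists
    have hs : (0:ℝ) < ε/8 := by linarith
    have hKc : (0:ℝ) ≤ (K:ℝ) := Nat.cast_nonneg K
    obtain ⟨N, hN⟩ := eventually_atTop.1
      ((hminab (ε/8) hs).eventually (gt_mem_nhds (show (0:ℝ) < ε/(8*(K+1)) by positivity)))
    refine ⟨N, fun n hn => ?_⟩
    have hmn := hN n hn
    have hside' := hside n K hKc (ε/8) hs
    have hPNn := hPN n
    have habsn := habs_eq n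
    have hminnn : (0:ℝ) ≤ min (a n (ε/8)) (b n (ε/8)) :=
      le_min ENNReal.toReal_nonneg ENNReal.toReal_nonneg
    have key : ∫ ω, |Xs n ω - m| ∂μ
        ≤ 2*(ε/8) + 2*(∫ ω, max (|X ω - m| - K) 0 ∂μ)
          + 2*((K:ℝ) * min (a n (ε/8)) (b n (ε/8))) := by
      rcases min_cases (a n (ε/8)) (b n (ε/8)) with ⟨hmeq, _⟩ | ⟨hmeq, _⟩
      · have hKm : (K:ℝ) * min (a n (ε/8)) (b n (ε/8)) = K * a n (ε/8) := by rw [hmeq]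
        linarith [hside'.1]
      · have hKm : (K:ℝ) * min (a n (ε/8)) (b n (ε/8)) = K * b n (ε/8) := by rw [hmeq]
        linarith [hside'.2]
    have h9 : ((K:ℝ)+1) * min (a n (ε/8)) (b n (ε/8)) < (K+1) * (ε/(8*(K+1))) :=
      mul_lt_mul_of_pos_left hmn (by positivity)
    have h10 : ((K:ℝ)+1) * (ε/(8*(K+1))) = ε/8 := by
      field_simp
    have h11 : (K:ℝ) * min (a n (ε/8)) (b n (ε/8))
        ≤ ((K:ℝ)+1) * min (a n (ε/8)) (b n (ε/8)) := by nlinarith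
    rw [Real.dist_eq, sub_zero,
      abs_of_nonneg (integral_nonneg (fun ω => abs_nonneg _))]
    linarith
  -- conclusion
  rw [Metric.tendsto_atTop]
  intro ε hε
  obtain ⟨K, hKlt⟩ :=
    (hphiT.eventually (gt_mem_nhds (show (0:ℝ) < ε/4 by linarith))).exists
  have hKc : (0:ℝ) ≤ (K:ℝ) := Nat.cast_nonneg K
  obtain ⟨N, hN⟩ := eventually_atTop.1
    (hZto.eventually (gt_mem_nhds (show (0:ℝ) < ε/(2*(1+2*K)) by positivity)))
  refine ⟨N, fun n hn => ?_⟩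
  have h3 := hN n hn
  have h1 : e n ≤ 2*(∫ ω, max (|Xs n ω - m| ^ p - K) 0 ∂μ)
      + (1+2*(K:ℝ))*(∫ ω, |Xs n ω - m| ∂μ) := by
    calc e n = ∫ ω, |Xs n ω - m| ^ p ∂μ := rfl
      _ ≤ ∫ ω, (2 * max (|Xs n ω - m| ^ p - K) 0 + (1+2*(K:ℝ)) * |Xs n ω - m|) ∂μ :=
          integral_mono (hdom1 n).1
            (((hphid K hKc n).1.const_mul 2).add ((hZabs n).const_mul (1+2*K)))
            (fun ω => rtrunc hp hKc _)
      _ = _ := by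
          have j1 : Integrable (fun ω => 2 * max (|Xs n ω - m| ^ p - K) 0) μ :=
            (hphid K hKc n).1.const_mul 2
          have j2 : Integrable (fun ω => (1+2*(K:ℝ)) * |Xs n ω - m|) μ :=
            (hZabs n).const_mul (1+2*K)
          rw [integral_add j1 j2]
          congr 1
          · rw [show (fun ω => 2 * max (|Xs n ω - m| ^ p - K) 0)
                = fun ω => (2:ℝ) • max (|Xs n ω - m| ^ p - K) 0 by
                  funext ω; simp [smul_eq_mul]]
            rw [integral_smul]
            simp [smul_eq_mul]
          · rw [show (fun ω => (1+2*(K:ℝ)) * |Xs n ω - m|)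
                = fun ω => (1+2*(K:ℝ)) • |Xs n ω - m| by
                  funext ω; simp [smul_eq_mul]]
            rw [integral_smul]
            simp [smul_eq_mul]
  have h2 := (hphid K hKc n).2
  have h4 : (1+2*(K:ℝ)) * (∫ ω, |Xs n ω - m| ∂μ) < (1+2*(K:ℝ)) * (ε/(2*(1+2*K))) :=
    mul_lt_mul_of_pos_left h3 (by positivity)
  have h5 : (1+2*(K:ℝ)) * (ε/(2*(1+2*(K:ℝ)))) = ε/2 := by
    field_simp
  rw [Real.dist_eq, sub_zero, abs_of_nonneg (he0 n)]
  linarith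
end

section
/- Let Z be an essentially bounded random variable and let U be uniformly distributed on [0,1] on the same probability space. Define W = (Q_Z(U) + Q_Z(1−U))/2, where Q_Z is the left quantile function of Z. Then: (a) each of Q_Z(U) and Q_Z(1−U) has the same distribution as Z; (b) the pair (Q_Z(U), Q_Z(1−U)) is antimonotonic; (c) E[W] = E[Z]; and (d) ess-sup W − ess-inf W ≤ (ess-sup Z − ess-inf Z)/2. -/
open MeasureTheory ProbabilityTheory Filter
open scoped ENNReal

set_option linter.unusedSectionVars false
set_option linter.unusedVariables false
section QAux
open MeasureTheory Set

variable {Ω : Type*} [MeasurableSpace Ω] {μ : Measure Ω} [IsProbabilityMeasure μ] {Z : Ω → ℝ}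

lemma qaux_exists_bound (hZ : MemLp Z ∞ μ) : ∃ C : ℝ, 0 ≤ C ∧ ∀ᵐ ω ∂μ, |Z ω| ≤ C := by
  have h : eLpNormEssSup Z μ < ⊤ := by
    have := hZ.2; rwa [eLpNorm_exponent_top] at this
  refine ⟨(eLpNormEssSup Z μ).toReal, ENNReal.toReal_nonneg, ?_⟩
  filter_upwards [ae_le_eLpNormEssSup (f := Z) (μ := μ)] with ω hω
  have h2 : ((‖Z ω‖₊ : ℝ≥0∞)).toReal ≤ (eLpNormEssSup Z μ).toReal :=
    ENNReal.toReal_mono h.ne hω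
  simpa [Real.norm_eq_abs] using h2

lemma qaux_le_one (f : Ω → ℝ) (c : ℝ) (h : μ {ω | c < f ω} = 0) : μ {ω | f ω ≤ c} = 1 := by
  refine le_antisymm prob_le_one ?_
  have hle := measure_union_le (μ := μ) {ω | f ω ≤ c} {ω | c < f ω}
  have hu : {ω | f ω ≤ c} ∪ {ω | c < f ω} = univ := by
    ext ω; simp [le_or_gt]
  rw [hu, measure_univ, h, add_zero] at hle
  exact hle

lemma qaux_ge_one (f : Ω → ℝ) (c : ℝ) (h : μ {ω | f ω < c} = 0) : μ {ω | c ≤ f ω} = 1 := by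
  refine le_antisymm prob_le_one ?_
  have hle := measure_union_le (μ := μ) {ω | c ≤ f ω} {ω | f ω < c}
  have hu : {ω | c ≤ f ω} ∪ {ω | f ω < c} = univ := by
    ext ω; simp [le_or_gt]
  rw [hu, measure_univ, h, add_zero] at hle
  exact hle

lemma qaux_sSup_null (W : Ω → ℝ) (hne : {x : ℝ | μ {ω | W ω < x} = 0}.Nonempty)
    (hbdd : BddAbove {x : ℝ | μ {ω | W ω < x} = 0}) :
    μ {ω | W ω < sSup {x : ℝ | μ {ω | W ω < x} = 0}} = 0 := by
  set T := {x : ℝ | μ {ω | W ω < x} = 0} with hT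
  have hsub : {ω | W ω < sSup T} ⊆ ⋃ n : ℕ, {ω | W ω < sSup T - 1/(n+1)} := by
    intro ω hω
    obtain ⟨n, hn⟩ := exists_nat_one_div_lt (show (0:ℝ) < sSup T - W ω by
      simp only [mem_setOf_eq] at hω; linarith)
    exact mem_iUnion.2 ⟨n, by simp only [mem_setOf_eq]; linarith⟩
  refine measure_mono_null hsub (measure_iUnion_null fun n => ?_)
  have h1 : sSup T - 1/(n+1) < sSup T := by
    have : (0:ℝ) < 1/((n:ℝ)+1) := by positivity
    linarith
  obtain ⟨x, hxT, hx⟩ := exists_lt_of_lt_csSup hne h1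
  exact measure_mono_null (fun ω hω => lt_trans hω hx) hxT

lemma qaux_sInf_null (W : Ω → ℝ) (hne : {x : ℝ | μ {ω | x < W ω} = 0}.Nonempty)
    (hbdd : BddBelow {x : ℝ | μ {ω | x < W ω} = 0}) :
    μ {ω | sInf {x : ℝ | μ {ω | x < W ω} = 0} < W ω} = 0 := by
  set T := {x : ℝ | μ {ω | x < W ω} = 0} with hT
  have hsub : {ω | sInf T < W ω} ⊆ ⋃ n : ℕ, {ω | sInf T + 1/(n+1) < W ω} := by
    intro ω hω
    obtain ⟨n, hn⟩ := exists_nat_one_div_lt (show (0:ℝ) < W ω - sInf T by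
      simp only [mem_setOf_eq] at hω; linarith)
    exact mem_iUnion.2 ⟨n, by simp only [mem_setOf_eq]; linarith⟩
  refine measure_mono_null hsub (measure_iUnion_null fun n => ?_)
  have h1 : sInf T < sInf T + 1/(n+1) := by
    have : (0:ℝ) < 1/((n:ℝ)+1) := by positivity
    linarith
  obtain ⟨x, hxT, hx⟩ := exists_lt_of_csInf_lt hne h1
  exact measure_mono_null (fun ω hω => lt_trans hx hω) hxT

variable {m M : ℝ}

lemma qaux_M_mem (hM : μ {ω | M < Z ω} = 0) {t : ℝ} (ht1 : t ≤ 1) :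
    M ∈ {x : ℝ | t ≤ (μ {ω | Z ω ≤ x}).toReal} := by
  simp only [mem_setOf_eq, qaux_le_one Z M hM]
  simpa using ht1

lemma qaux_bdd (hm : μ {ω | Z ω < m} = 0) {t : ℝ} (ht : 0 < t) :
    ∀ x ∈ {x : ℝ | t ≤ (μ {ω | Z ω ≤ x}).toReal}, m ≤ x := by
  intro x hx
  by_contra h
  push_neg at h
  have h0 : μ {ω | Z ω ≤ x} = 0 :=
    measure_mono_null (fun ω hω => lt_of_le_of_lt hω h) hm
  rw [mem_setOf_eq, h0] at hx
  simp at hx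
  linarith

lemma qaux_le_M (hm : μ {ω | Z ω < m} = 0) (hM : μ {ω | M < Z ω} = 0)
    {t : ℝ} (ht : 0 < t) (ht1 : t ≤ 1) : leftQuantile μ Z t ≤ M :=
  csInf_le ⟨m, qaux_bdd hm ht⟩ (qaux_M_mem hM ht1)

lemma qaux_m_le (hm : μ {ω | Z ω < m} = 0) (hM : μ {ω | M < Z ω} = 0)
    {t : ℝ} (ht : 0 < t) (ht1 : t ≤ 1) : m ≤ leftQuantile μ Z t :=
  le_csInf ⟨M, qaux_M_mem hM ht1⟩ (qaux_bdd hm ht)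

lemma qaux_mono (hm : μ {ω | Z ω < m} = 0) (hM : μ {ω | M < Z ω} = 0)
    {t t' : ℝ} (ht : 0 < t) (ht1' : t' ≤ 1) (htt : t ≤ t') :
    leftQuantile μ Z t ≤ leftQuantile μ Z t' :=
  csInf_le_csInf ⟨m, qaux_bdd hm ht⟩ ⟨M, qaux_M_mem hM ht1'⟩
    (fun x hx => le_trans htt hx)

lemma qaux_galois (hZm : Measurable Z) (hm : μ {ω | Z ω < m} = 0) (hM : μ {ω | M < Z ω} = 0)
    {t : ℝ} (ht : 0 < t) (ht1 : t ≤ 1) (x : ℝ) :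
    leftQuantile μ Z t ≤ x ↔ t ≤ (μ {ω | Z ω ≤ x}).toReal := by
  constructor
  · intro hqx
    set q := leftQuantile μ Z t with hq
    have hstep : ∀ n : ℕ, ENNReal.ofReal t ≤ μ {ω | Z ω ≤ q + 1/(n+1)} := by
      intro n
      have hqlt : q < q + 1/((n:ℝ)+1) := by
        have : (0:ℝ) < 1/((n:ℝ)+1) := by positivity
        linarith
      obtain ⟨s, hs, hslt⟩ := exists_lt_of_csInf_lt
        (⟨M, qaux_M_mem hM ht1⟩ : {x : ℝ | t ≤ (μ {ω | Z ω ≤ x}).toReal}.Nonempty) hqlt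
      have h1 : ENNReal.ofReal t ≤ μ {ω | Z ω ≤ s} := by
        rw [← ENNReal.ofReal_toReal (measure_ne_top μ {ω | Z ω ≤ s})]
        exact ENNReal.ofReal_le_ofReal hs
      exact h1.trans (measure_mono fun ω hω => le_trans hω hslt.le)
    have hmeas : ∀ n : ℕ, NullMeasurableSet {ω | Z ω ≤ q + 1/(n+1)} μ :=
      fun n => (hZm measurableSet_Iic).nullMeasurableSet
    have hanti : Antitone (fun n : ℕ => {ω | Z ω ≤ q + 1/(n+1)}) := by
      intro a b hab ω hω
      simp only [mem_setOf_eq] at hω ⊢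
      have hinv : 1/((b:ℝ)+1) ≤ 1/((a:ℝ)+1) := by
        have hab' : (a:ℝ) ≤ (b:ℝ) := Nat.cast_le.2 hab
        apply one_div_le_one_div_of_le (by positivity)
        linarith
      linarith
    have hiter := tendsto_measure_iInter_atTop hmeas hanti ⟨0, measure_ne_top μ _⟩
    have hinter : (⋂ n : ℕ, {ω | Z ω ≤ q + 1/(n+1)}) = {ω | Z ω ≤ q} := by
      ext ω
      simp only [mem_iInter, mem_setOf_eq]
      constructor
      · intro h
        by_contra hc
        push_neg at hc
        obtain ⟨n, hn⟩ := exists_nat_one_div_lt (show (0:ℝ) < Z ω - q by linarith)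
        have := h n
        linarith
      · intro h n
        have : (0:ℝ) < 1/((n:ℝ)+1) := by positivity
        linarith
    rw [hinter] at hiter
    have hkey : ENNReal.ofReal t ≤ μ {ω | Z ω ≤ q} := ge_of_tendsto' hiter hstep
    have hkey2 : ENNReal.ofReal t ≤ μ {ω | Z ω ≤ x} :=
      hkey.trans (measure_mono fun ω hω => le_trans hω hqx)
    have := ENNReal.toReal_mono (measure_ne_top μ {ω | Z ω ≤ x}) hkey2
    rwa [ENNReal.toReal_ofReal ht.le] at this
  · intro h
    exact csInf_le ⟨m, qaux_bdd hm ht⟩ h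

lemma qaux_pair (hm : μ {ω | Z ω < m} = 0) (hM : μ {ω | M < Z ω} = 0)
    {u v : ℝ} (hu : u ∈ Set.Ioo (0:ℝ) 1) (hv : v ∈ Set.Ioo (0:ℝ) 1) :
    leftQuantile μ Z u + leftQuantile μ Z (1 - u) ≤
      leftQuantile μ Z v + leftQuantile μ Z (1 - v) + (M - m) := by
  obtain ⟨hu0, hu1⟩ := hu
  obtain ⟨hv0, hv1⟩ := hv
  rcases le_total u (1 - v) with h | h
  · have h1 : leftQuantile μ Z u ≤ leftQuantile μ Z (1 - v) :=
      qaux_mono hm hM hu0 (by linarith) h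
    have h2 : leftQuantile μ Z (1 - u) ≤ M := qaux_le_M hm hM (by linarith) (by linarith)
    have h3 : m ≤ leftQuantile μ Z v := qaux_m_le hm hM hv0 hv1.le
    linarith
  · have h1 : leftQuantile μ Z (1 - u) ≤ leftQuantile μ Z v :=
      qaux_mono hm hM (by linarith) hv1.le (by linarith)
    have h2 : leftQuantile μ Z u ≤ M := qaux_le_M hm hM hu0 hu1.le
    have h3 : m ≤ leftQuantile μ Z (1 - v) := qaux_m_le hm hM (by linarith) (by linarith)
    linarith

/-- Monotone extension of the left quantile function to all of `ℝ`. -/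
noncomputable def qaux_monQ (μ : Measure Ω) (Z : Ω → ℝ) (m : ℝ) (t : ℝ) : ℝ :=
  if t ≤ 0 then m else leftQuantile μ Z (min t 1)

lemma qaux_monQ_eq {t : ℝ} (ht : t ∈ Set.Ioo (0:ℝ) 1) :
    qaux_monQ μ Z m t = leftQuantile μ Z t := by
  rw [qaux_monQ, if_neg (not_le.2 ht.1), min_eq_left ht.2.le]

lemma qaux_monQ_mono (hm : μ {ω | Z ω < m} = 0) (hM : μ {ω | M < Z ω} = 0) :
    Monotone (qaux_monQ μ Z m) := by
  intro a b hab
  by_cases ha : a ≤ 0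
  · rw [qaux_monQ, if_pos ha]
    by_cases hb : b ≤ 0
    · rw [qaux_monQ, if_pos hb]
    · push_neg at hb
      rw [qaux_monQ, if_neg (not_le.2 hb)]
      exact qaux_m_le hm hM (lt_min hb one_pos) (min_le_right _ _)
  · push_neg at ha
    rw [qaux_monQ, if_neg (not_le.2 ha), qaux_monQ, if_neg (not_le.2 (lt_of_lt_of_le ha hab))]
    exact qaux_mono hm hM (lt_min ha one_pos) (min_le_right _ _) (min_le_min hab le_rfl)

lemma qaux_law (hZm : Measurable Z) (hm : μ {ω | Z ω < m} = 0) (hM : μ {ω | M < Z ω} = 0)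
    {V : Ω → ℝ} (hVm : Measurable V)
    (hIcc : ∀ c : ℝ, 0 ≤ c → c ≤ 1 → μ {ω | V ω ≤ c} = ENNReal.ofReal c)
    (hG : ∀ᵐ ω ∂μ, V ω ∈ Set.Ioo (0:ℝ) 1) :
    Measure.map (fun ω => qaux_monQ μ Z m (V ω)) μ = Measure.map Z μ := by
  have hcomp : Measurable fun ω => qaux_monQ μ Z m (V ω) :=
    ((qaux_monQ_mono hm hM).measurable).comp hVm
  haveI : IsProbabilityMeasure (Measure.map Z μ) :=
    Measure.isProbabilityMeasure_map hZm.aemeasurable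
  haveI : IsProbabilityMeasure (Measure.map (fun ω => qaux_monQ μ Z m (V ω)) μ) :=
    Measure.isProbabilityMeasure_map hcomp.aemeasurable
  refine Measure.ext_of_Iic _ _ (fun x => ?_)
  rw [Measure.map_apply hcomp measurableSet_Iic, Measure.map_apply hZm measurableSet_Iic]
  set F := (μ {ω | Z ω ≤ x}).toReal with hF
  have hF0 : 0 ≤ F := ENNReal.toReal_nonneg
  have hF1 : F ≤ 1 := by
    have h1 := ENNReal.toReal_mono (by simp : (1 : ℝ≥0∞) ≠ ⊤)
      (prob_le_one (μ := μ) (s := {ω | Z ω ≤ x}))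
    simpa using h1
  have hsets : ((fun ω => qaux_monQ μ Z m (V ω)) ⁻¹' Iic x : Set Ω)
      =ᵐ[μ] (V ⁻¹' Iic F : Set Ω) := by
    filter_upwards [hG] with ω hω
    have h1 : qaux_monQ μ Z m (V ω) = leftQuantile μ Z (V ω) := qaux_monQ_eq hω
    have h2 : (leftQuantile μ Z (V ω) ≤ x) ↔ (V ω ≤ F) :=
      qaux_galois hZm hm hM hω.1 hω.2.le x
    show (qaux_monQ μ Z m (V ω) ≤ x) = (V ω ≤ F)
    rw [h1, eq_iff_iff]
    exact h2
  rw [measure_congr hsets]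
  have h3 : (V ⁻¹' Iic F : Set Ω) = {ω | V ω ≤ F} := rfl
  rw [h3, hIcc F hF0 hF1, hF, ENNReal.ofReal_toReal (measure_ne_top μ _)]
  rfl

lemma qaux_essInf_null (hZ : MemLp Z ∞ μ) : μ {ω | Z ω < essInfR μ Z} = 0 := by
  obtain ⟨C, hC0, hC⟩ := qaux_exists_bound hZ
  have hae : μ {ω | ¬ |Z ω| ≤ C} = 0 := ae_iff.1 hC
  have hne : (-C) ∈ {x : ℝ | μ {ω | Z ω < x} = 0} := by
    refine measure_mono_null (fun ω hω => ?_) hae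
    simp only [mem_setOf_eq, not_le] at hω ⊢
    exact lt_abs.2 (Or.inr (by linarith))
  have hbdd : BddAbove {x : ℝ | μ {ω | Z ω < x} = 0} := by
    refine ⟨C + 1, fun x hx => ?_⟩
    by_contra h
    push_neg at h
    have hsub : {ω | |Z ω| ≤ C} ⊆ {ω | Z ω < x} := by
      intro ω hω
      simp only [mem_setOf_eq, abs_le] at hω ⊢
      linarith [hω.2]
    have h1 : μ {ω | |Z ω| ≤ C} = 0 := measure_mono_null hsub hx
    have h2 := measure_union_le (μ := μ) {ω | |Z ω| ≤ C} {ω | ¬ |Z ω| ≤ C}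
    have hu : {ω | |Z ω| ≤ C} ∪ {ω | ¬ |Z ω| ≤ C} = univ := by
      ext ω
      simp only [mem_union, mem_setOf_eq, mem_univ, iff_true]
      exact em _
    rw [hu, measure_univ, h1, hae, add_zero] at h2
    simp at h2
  exact qaux_sSup_null Z ⟨-C, hne⟩ hbdd

lemma qaux_essSup_null (hZ : MemLp Z ∞ μ) : μ {ω | essSupR μ Z < Z ω} = 0 := by
  obtain ⟨C, hC0, hC⟩ := qaux_exists_bound hZ
  have hae : μ {ω | ¬ |Z ω| ≤ C} = 0 := ae_iff.1 hC
  have hne : C ∈ {x : ℝ | μ {ω | x < Z ω} = 0} := by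
    refine measure_mono_null (fun ω hω => ?_) hae
    simp only [mem_setOf_eq, not_le] at hω ⊢
    exact lt_abs.2 (Or.inl hω)
  have hbdd : BddBelow {x : ℝ | μ {ω | x < Z ω} = 0} := by
    refine ⟨-C - 1, fun x hx => ?_⟩
    by_contra h
    push_neg at h
    have hsub : {ω | |Z ω| ≤ C} ⊆ {ω | x < Z ω} := by
      intro ω hω
      simp only [mem_setOf_eq, abs_le] at hω ⊢
      linarith [hω.1]
    have h1 : μ {ω | |Z ω| ≤ C} = 0 := measure_mono_null hsub hx
    have h2 := measure_union_le (μ := μ) {ω | |Z ω| ≤ C} {ω | ¬ |Z ω| ≤ C}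
    have hu : {ω | |Z ω| ≤ C} ∪ {ω | ¬ |Z ω| ≤ C} = univ := by
      ext ω
      simp only [mem_union, mem_setOf_eq, mem_univ, iff_true]
      exact em _
    rw [hu, measure_univ, h1, hae, add_zero] at h2
    simp at h2
  exact qaux_sInf_null Z ⟨C, hne⟩ hbdd

end QAux


/-- The antimonotonic quantile coupling: for `U` uniform on
`[0,1]`, the pair `(Q_Z(U), Q_Z(1-U))` consists of two copies of `Z`, is
antimonotonic, its average `W` has the same mean as `Z`, and the range of `W`
is at most half the range of `Z`. -/
theorem quantile_antimonotonic_coupling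
    {Ω : Type*} [MeasurableSpace Ω] (μ : Measure Ω) [IsProbabilityMeasure μ]
    (Z U : Ω → ℝ) (hZ : MemLp Z ∞ μ) (hZm : Measurable Z) (hUm : Measurable U)
    (hU : Measure.map U μ = MeasureTheory.volume.restrict (Set.Icc (0 : ℝ) 1)) :
    (SameDist μ (fun ω => leftQuantile μ Z (U ω)) Z ∧
     SameDist μ (fun ω => leftQuantile μ Z (1 - U ω)) Z) ∧
    Antimonotonic μ (fun ω => leftQuantile μ Z (U ω)) (fun ω => leftQuantile μ Z (1 - U ω)) ∧
    (∫ ω, (leftQuantile μ Z (U ω) + leftQuantile μ Z (1 - U ω)) / 2 ∂μ) = (∫ ω, Z ω ∂μ) ∧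
    essSupR μ (fun ω => (leftQuantile μ Z (U ω) + leftQuantile μ Z (1 - U ω)) / 2) -
        essInfR μ (fun ω => (leftQuantile μ Z (U ω) + leftQuantile μ Z (1 - U ω)) / 2) ≤
      (essSupR μ Z - essInfR μ Z) / 2 := by
  classical
  set m := essInfR μ Z with hmdef
  set M := essSupR μ Z with hMdef
  have hm : μ {ω | Z ω < m} = 0 := qaux_essInf_null hZ
  have hM : μ {ω | M < Z ω} = 0 := qaux_essSup_null hZ
  -- uniform distribution facts
  have hIccU : ∀ c : ℝ, 0 ≤ c → c ≤ 1 → μ {ω | U ω ≤ c} = ENNReal.ofReal c := by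
    intro c hc0 hc1
    have h1 : {ω | U ω ≤ c} = U ⁻¹' Set.Iic c := rfl
    rw [h1, ← Measure.map_apply hUm measurableSet_Iic, hU,
      Measure.restrict_apply measurableSet_Iic]
    have h2 : Set.Iic c ∩ Set.Icc 0 1 = Set.Icc 0 c := by
      ext y
      simp only [Set.mem_inter_iff, Set.mem_Iic, Set.mem_Icc]
      constructor
      · rintro ⟨a, b, _⟩; exact ⟨b, a⟩
      · rintro ⟨a, b⟩; exact ⟨b, a, b.trans hc1⟩
    rw [h2, Real.volume_Icc, sub_zero]
  have hGU : ∀ᵐ ω ∂μ, U ω ∈ Set.Ioo (0:ℝ) 1 := by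
    rw [ae_iff]
    have h1 : {ω | ¬ U ω ∈ Set.Ioo (0:ℝ) 1} = U ⁻¹' (Set.Ioo (0:ℝ) 1)ᶜ := rfl
    rw [h1, ← Measure.map_apply hUm measurableSet_Ioo.compl, hU,
      Measure.restrict_apply measurableSet_Ioo.compl]
    refine measure_mono_null (fun y hy => ?_)
      (((Set.finite_singleton (1:ℝ)).insert 0).measure_zero volume)
    have hy0 : 0 ≤ y := hy.2.1
    have hy1 : y ≤ 1 := hy.2.2
    have hyn := hy.1
    simp only [Set.mem_compl_iff, Set.mem_Ioo, not_and, not_lt] at hyn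
    simp only [Set.mem_insert_iff, Set.mem_singleton_iff]
    rcases eq_or_lt_of_le hy0 with h | h
    · exact Or.inl h.symm
    · exact Or.inr (le_antisymm hy1 (hyn h))
  have hIccV : ∀ c : ℝ, 0 ≤ c → c ≤ 1 → μ {ω | 1 - U ω ≤ c} = ENNReal.ofReal c := by
    intro c hc0 hc1
    have h1 : {ω | 1 - U ω ≤ c} = U ⁻¹' Set.Ici (1 - c) := by
      ext ω
      simp only [Set.mem_setOf_eq, Set.mem_preimage, Set.mem_Ici]
      constructor <;> intro h <;> linarith
    rw [h1, ← Measure.map_apply hUm measurableSet_Ici, hU,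
      Measure.restrict_apply measurableSet_Ici]
    have h2 : Set.Ici (1 - c) ∩ Set.Icc 0 1 = Set.Icc (1 - c) 1 := by
      ext y
      simp only [Set.mem_inter_iff, Set.mem_Ici, Set.mem_Icc]
      constructor
      · rintro ⟨a, _, b⟩; exact ⟨a, b⟩
      · rintro ⟨a, b⟩; exact ⟨a, by linarith, b⟩
    rw [h2, Real.volume_Icc]
    congr 1
    ring
  have hGV : ∀ᵐ ω ∂μ, 1 - U ω ∈ Set.Ioo (0:ℝ) 1 := by
    filter_upwards [hGU] with ω hω
    exact ⟨by linarith [hω.2], by linarith [hω.1]⟩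
  -- laws
  have hlawU : Measure.map (fun ω => qaux_monQ μ Z m (U ω)) μ = Measure.map Z μ :=
    qaux_law hZm hm hM hUm hIccU hGU
  have hlawV : Measure.map (fun ω => qaux_monQ μ Z m (1 - U ω)) μ = Measure.map Z μ :=
    qaux_law hZm hm hM (measurable_const.sub hUm) hIccV hGV
  have haeU : (fun ω => leftQuantile μ Z (U ω)) =ᵐ[μ] (fun ω => qaux_monQ μ Z m (U ω)) := by
    filter_upwards [hGU] with ω hω
    exact (qaux_monQ_eq hω).symm
  have haeV : (fun ω => leftQuantile μ Z (1 - U ω)) =ᵐ[μ]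
      (fun ω => qaux_monQ μ Z m (1 - U ω)) := by
    filter_upwards [hGV] with ω hω
    exact (qaux_monQ_eq hω).symm
  have hsdU : SameDist μ (fun ω => leftQuantile μ Z (U ω)) Z := by
    rw [SameDist, Measure.map_congr haeU]
    exact hlawU
  have hsdV : SameDist μ (fun ω => leftQuantile μ Z (1 - U ω)) Z := by
    rw [SameDist, Measure.map_congr haeV]
    exact hlawV
  -- antimonotonicity
  have hanti : Antimonotonic μ (fun ω => leftQuantile μ Z (U ω))
      (fun ω => leftQuantile μ Z (1 - U ω)) := by
    rw [Antimonotonic, ae_iff]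
    set G := U ⁻¹' Set.Ioo (0:ℝ) 1 with hGdef
    have hGc : μ Gᶜ = 0 := ae_iff.1 hGU
    have hsub2 : ((G ×ˢ G)ᶜ : Set (Ω × Ω)) ⊆ (Gᶜ ×ˢ Set.univ) ∪ (Set.univ ×ˢ Gᶜ) := by
      intro p hp
      simp only [Set.mem_compl_iff, Set.mem_prod, not_and] at hp
      by_cases h1 : p.1 ∈ G
      · exact Or.inr ⟨Set.mem_univ _, hp h1⟩
      · exact Or.inl ⟨h1, Set.mem_univ _⟩
    have hprodnull : (μ.prod μ) ((G ×ˢ G)ᶜ) = 0 := by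
      refine measure_mono_null hsub2 (measure_union_null ?_ ?_)
      · rw [Measure.prod_prod, hGc, zero_mul]
      · rw [Measure.prod_prod, hGc, mul_zero]
    have hsub3 : {p : Ω × Ω |
        ¬(leftQuantile μ Z (U p.1) - leftQuantile μ Z (U p.2)) *
          (leftQuantile μ Z (1 - U p.1) - leftQuantile μ Z (1 - U p.2)) ≤ 0}
        ⊆ (G ×ˢ G)ᶜ := by
      intro p hp hpin
      apply hp
      obtain ⟨hp1, hp2⟩ := hpin
      have h1 : U p.1 ∈ Set.Ioo (0:ℝ) 1 := hp1
      have h2 : U p.2 ∈ Set.Ioo (0:ℝ) 1 := hp2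
      rcases le_total (U p.1) (U p.2) with h | h
      · have ha : leftQuantile μ Z (U p.1) ≤ leftQuantile μ Z (U p.2) :=
          qaux_mono hm hM h1.1 h2.2.le h
        have hb : leftQuantile μ Z (1 - U p.2) ≤ leftQuantile μ Z (1 - U p.1) :=
          qaux_mono hm hM (by linarith [h2.2]) (by linarith [h1.1]) (by linarith)
        exact mul_nonpos_iff.2 (Or.inr ⟨by linarith, by linarith⟩)
      · have ha : leftQuantile μ Z (U p.2) ≤ leftQuantile μ Z (U p.1) :=
          qaux_mono hm hM h2.1 h1.2.le h
        have hb : leftQuantile μ Z (1 - U p.1) ≤ leftQuantile μ Z (1 - U p.2) :=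
          qaux_mono hm hM (by linarith [h1.2]) (by linarith [h2.1]) (by linarith)
        exact mul_nonpos_iff.2 (Or.inl ⟨by linarith, by linarith⟩)
    exact measure_mono_null hsub3 hprodnull
  -- integrals
  have hZint : Integrable Z μ := hZ.integrable le_top
  have hint : ∀ f : Ω → ℝ, Measurable f → Measure.map f μ = Measure.map Z μ →
      Integrable f μ ∧ ∫ ω, f ω ∂μ = ∫ ω, Z ω ∂μ := by
    intro f hf hmap
    have h1 : Integrable (id : ℝ → ℝ) (Measure.map Z μ) := by
      rw [integrable_map_measure aestronglyMeasurable_id hZm.aemeasurable]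
      exact hZint
    constructor
    · have h2 : Integrable (id : ℝ → ℝ) (Measure.map f μ) := by rw [hmap]; exact h1
      exact (integrable_map_measure aestronglyMeasurable_id hf.aemeasurable).1 h2
    · have h3 := integral_map (μ := μ) (φ := f) hf.aemeasurable
        (f := fun x : ℝ => x) aestronglyMeasurable_id
      have h4 := integral_map (μ := μ) (φ := Z) hZm.aemeasurable
        (f := fun x : ℝ => x) aestronglyMeasurable_id
      rw [← h3, hmap, h4]
  obtain ⟨hintU, hIU⟩ := hint (fun ω => qaux_monQ μ Z m (U ω))
    (((qaux_monQ_mono hm hM).measurable).comp hUm) hlawU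
  obtain ⟨hintV, hIV⟩ := hint (fun ω => qaux_monQ μ Z m (1 - U ω))
    (((qaux_monQ_mono hm hM).measurable).comp (measurable_const.sub hUm)) hlawV
  have hmean : (∫ ω, (leftQuantile μ Z (U ω) + leftQuantile μ Z (1 - U ω)) / 2 ∂μ)
      = ∫ ω, Z ω ∂μ := by
    have hcong : (fun ω => (leftQuantile μ Z (U ω) + leftQuantile μ Z (1 - U ω)) / 2)
        =ᵐ[μ] (fun ω => (qaux_monQ μ Z m (U ω) + qaux_monQ μ Z m (1 - U ω)) / 2) := by
      filter_upwards [hGU, hGV] with ω h1 h2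
      rw [qaux_monQ_eq h1, qaux_monQ_eq h2]
    rw [integral_congr_ae hcong, integral_div, integral_add hintU hintV, hIU, hIV]
    ring
  refine ⟨⟨hsdU, hsdV⟩, hanti, hmean, ?_⟩
  -- part (d)
  set W : Ω → ℝ := fun ω => (leftQuantile μ Z (U ω) + leftQuantile μ Z (1 - U ω)) / 2
    with hWdef
  set G := U ⁻¹' Set.Ioo (0:ℝ) 1 with hGdef
  have hGc : μ Gᶜ = 0 := ae_iff.1 hGU
  have hWbound : ∀ ω, ω ∈ G → m ≤ W ω ∧ W ω ≤ M := by
    intro ω hω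
    have h1 : U ω ∈ Set.Ioo (0:ℝ) 1 := hω
    have ha1 : m ≤ leftQuantile μ Z (U ω) := qaux_m_le hm hM h1.1 h1.2.le
    have ha2 : leftQuantile μ Z (U ω) ≤ M := qaux_le_M hm hM h1.1 h1.2.le
    have hb1 : m ≤ leftQuantile μ Z (1 - U ω) :=
      qaux_m_le hm hM (by linarith [h1.2]) (by linarith [h1.1])
    have hb2 : leftQuantile μ Z (1 - U ω) ≤ M :=
      qaux_le_M hm hM (by linarith [h1.2]) (by linarith [h1.1])
    constructor
    · simp only [hWdef]; linarith
    · simp only [hWdef]; linarith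
  have hWm : μ {ω | W ω < m} = 0 := by
    refine measure_mono_null ?_ hGc
    intro ω hω hg
    exact absurd hω (not_lt.2 (hWbound ω hg).1)
  have hWM : μ {ω | M < W ω} = 0 := by
    refine measure_mono_null ?_ hGc
    intro ω hω hg
    exact absurd hω (not_lt.2 (hWbound ω hg).2)
  set T := {x : ℝ | μ {ω | W ω < x} = 0} with hTdef
  have hTbdd : BddAbove T := by
    refine ⟨M + 1, fun x hx => ?_⟩
    by_contra h
    push_neg at h
    have h1 : μ {ω | W ω ≤ M} = 1 := qaux_le_one W M hWM
    have h3 : {ω | W ω ≤ M} ⊆ {ω | W ω < x} := by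
      intro ω hω
      simp only [Set.mem_setOf_eq] at hω ⊢
      linarith
    have h4 := measure_mono (μ := μ) h3
    rw [h1, hx] at h4
    simp at h4
  have key1 : ∀ ε : ℝ, 0 < ε → μ {ω | W ω < sSup T + ε} ≠ 0 := by
    intro ε hε h0
    have : sSup T + ε ≤ sSup T := le_csSup hTbdd h0
    linarith
  have key2 : ∀ ε : ℝ, 0 < ε → μ {ω | sSup T + (M - m) / 2 + ε < W ω} = 0 := by
    intro ε hε
    have hA : μ ({ω | W ω < sSup T + ε} ∩ G) ≠ 0 := by
      intro h0
      apply key1 ε hε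
      have hsub : {ω | W ω < sSup T + ε} ⊆ ({ω | W ω < sSup T + ε} ∩ G) ∪ Gᶜ := by
        intro ω hω
        by_cases hg : ω ∈ G
        · exact Or.inl ⟨hω, hg⟩
        · exact Or.inr hg
      exact measure_mono_null hsub (measure_union_null h0 hGc)
    obtain ⟨ω₀, hω₀⟩ := nonempty_of_measure_ne_zero hA
    refine measure_mono_null ?_ hGc
    intro ω hω hg
    have hgu : U ω ∈ Set.Ioo (0:ℝ) 1 := hg
    have hgu0 : U ω₀ ∈ Set.Ioo (0:ℝ) 1 := hω₀.2
    have hb := qaux_pair hm hM hgu hgu0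
    have h1 : W ω₀ < sSup T + ε := hω₀.1
    have h2 : sSup T + (M - m) / 2 + ε < W ω := hω
    simp only [hWdef] at h1 h2
    linarith
  have hSbdd : BddBelow {x : ℝ | μ {ω | x < W ω} = 0} := by
    refine ⟨m - 1, fun x hx => ?_⟩
    by_contra h
    push_neg at h
    have h1 : μ {ω | m ≤ W ω} = 1 := qaux_ge_one W m hWm
    have h3 : {ω | m ≤ W ω} ⊆ {ω | x < W ω} := by
      intro ω hω
      simp only [Set.mem_setOf_eq] at hω ⊢
      linarith
    have h4 := measure_mono (μ := μ) h3
    rw [h1, hx] at h4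
    simp at h4
  have hInfW : essInfR μ W = sSup T := rfl
  have hSupW : essSupR μ W = sInf {x : ℝ | μ {ω | x < W ω} = 0} := rfl
  have hfin : essSupR μ W ≤ sSup T + (M - m) / 2 := by
    refine le_of_forall_pos_le_add (fun ε hε => ?_)
    have h1 : (sSup T + (M - m) / 2 + ε) ∈ {x : ℝ | μ {ω | x < W ω} = 0} := key2 ε hε
    have h2 := csInf_le hSbdd h1
    rw [hSupW]
    linarith
  rw [hInfW] at *
  linarith
end

section
/- Let (Ω,𝓕,ℙ) be an atomless probability space and define 𝒰(Z) = E[Z] − Var(Z)·|2 − Var(Z)| for Z ∈ L^∞, and let ≿ be the relation X ≿ Y iff 𝒰(X) ≥ 𝒰(Y). Then ≿ exhibits weak risk aversion (𝒰(X) ≤ E[X] = 𝒰(E[X]) for all X ∈ L^∞), but ≿ fails diversification on antimonotonic and identically distributed pairs: there exist X, Y ∈ L^∞ with (X,Y) antimonotonic, X and Y identically distributed (hence 𝒰(X) = 𝒰(Y)), such that 𝒰((X+Y)/2) < 𝒰(X). Concretely, if A, B, C partition Ω with ℙ(A)=ℙ(B)=ℙ(C)=1/3, then X = 3·𝟙_A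 and Y = 3·𝟙_B satisfy 𝒰(X) = 1 > 1/4 = 𝒰((X+Y)/2). Hence weak risk aversion does not imply diversification on antimonotonic and identically distributed pairs. -/
open MeasureTheory ProbabilityTheory Filter
open scoped ENNReal

section AuxSierpinski

variable {Ω : Type*} [MeasurableSpace Ω] {μ : Measure Ω}

lemma aux_half [IsProbabilityMeasure μ] (hat : Atomless μ) {s : Set Ω}
    (hs : MeasurableSet s) (hpos : 0 < μ s) :
    ∃ t, MeasurableSet t ∧ t ⊆ s ∧ 0 < μ t ∧ μ t ≤ μ s / 2 := by
  obtain ⟨t, ht, hts, htpos, htlt⟩ := hat s hs hpos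
  rcases le_or_gt (μ t) (μ s / 2) with h | h
  · exact ⟨t, ht, hts, htpos, h⟩
  · refine ⟨s \ t, hs.diff ht, Set.diff_subset, ?_, ?_⟩
    · rw [measure_diff hts ht.nullMeasurableSet (measure_ne_top μ t)]
      exact tsub_pos_of_lt htlt
    · rw [measure_diff hts ht.nullMeasurableSet (measure_ne_top μ t)]
      calc μ s - μ t ≤ μ s - μ s / 2 := tsub_le_tsub_left h.le _
        _ = μ s / 2 := ENNReal.sub_half (measure_ne_top μ s)

lemma aux_small [IsProbabilityMeasure μ] (hat : Atomless μ) {s : Set Ω}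
    (hs : MeasurableSet s) (hpos : 0 < μ s) {ε : ℝ≥0∞} (hε : 0 < ε) :
    ∃ t, MeasurableSet t ∧ t ⊆ s ∧ 0 < μ t ∧ μ t ≤ ε := by
  have key : ∀ n : ℕ, ∃ t, MeasurableSet t ∧ t ⊆ s ∧ 0 < μ t ∧ μ t ≤ μ s * 2⁻¹ ^ n := by
    intro n
    induction n with
    | zero => exact ⟨s, hs, subset_rfl, hpos, by simp⟩
    | succ n ih =>
      obtain ⟨t, ht, hts, htpos, htle⟩ := ih
      obtain ⟨u, hu, hut, hupos, hule⟩ := aux_half hat ht htpos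
      refine ⟨u, hu, hut.trans hts, hupos, ?_⟩
      calc μ u ≤ μ t / 2 := hule
        _ ≤ (μ s * 2⁻¹ ^ n) / 2 := by
            exact ENNReal.div_le_div_right htle 2
        _ = μ s * 2⁻¹ ^ (n + 1) := by
            rw [pow_succ, div_eq_mul_inv, mul_assoc]
  obtain ⟨n, hn⟩ := ENNReal.exists_inv_two_pow_lt hε.ne'
  obtain ⟨t, ht, hts, htpos, htle⟩ := key n
  refine ⟨t, ht, hts, htpos, htle.trans ?_⟩
  calc μ s * 2⁻¹ ^ n ≤ 1 * 2⁻¹ ^ n := by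
        exact mul_le_mul_left prob_le_one _
    _ = 2⁻¹ ^ n := one_mul _
    _ ≤ ε := hn.le

/-- Sierpiński: an atomless probability measure attains every value `c ≤ μ S`
on measurable subsets of `S`. -/
lemma aux_sierpinski [IsProbabilityMeasure μ] (hat : Atomless μ) {S : Set Ω}
    (hS : MeasurableSet S) {c : ℝ≥0∞} (hc : c ≤ μ S) :
    ∃ A, MeasurableSet A ∧ A ⊆ S ∧ μ A = c := by
  classical
  -- the invariant
  set P : Set Ω → Prop := fun A => MeasurableSet A ∧ A ⊆ S ∧ μ A ≤ c with hP
  have hstep : ∀ A : {A : Set Ω // P A}, ∃ t, MeasurableSet t ∧ t ⊆ S \ A.1 ∧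
      μ A.1 + μ t ≤ c ∧
      ∀ u, MeasurableSet u → u ⊆ S \ A.1 → μ A.1 + μ u ≤ c → μ u ≤ 2 * μ t := by
    rintro ⟨A, hAm, hAS, hAc⟩
    set T : Set ℝ≥0∞ := {m | ∃ u, MeasurableSet u ∧ u ⊆ S \ A ∧ μ A + μ u ≤ c ∧ μ u = m}
      with hT
    have h0T : (0 : ℝ≥0∞) ∈ T := ⟨∅, MeasurableSet.empty, Set.empty_subset _,
      by simpa using hAc, measure_empty⟩
    set g : ℝ≥0∞ := sSup T with hg
    rcases eq_or_ne g 0 with hg0 | hg0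
    · refine ⟨∅, MeasurableSet.empty, Set.empty_subset _, by simpa using hAc, ?_⟩
      intro u hu hus huc
      have : μ u ≤ g := le_sSup ⟨u, hu, hus, huc, rfl⟩
      simp [hg0] at this
      simp [this]
    · have hgtop : g ≠ ∞ := by
        refine ne_top_of_le_ne_top (measure_ne_top μ Set.univ) (sSup_le ?_)
        rintro m ⟨u, hu, hus, huc, rfl⟩
        exact measure_mono (Set.subset_univ u)
      have hhalf : g / 2 < g := ENNReal.half_lt_self hg0 hgtop
      obtain ⟨m, hmT, hm⟩ := lt_sSup_iff.mp hhalf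
      obtain ⟨t, ht, hts, htc, rfl⟩ := hmT
      refine ⟨t, ht, hts, htc, ?_⟩
      intro u hu hus huc
      have h1 : μ u ≤ g := le_sSup ⟨u, hu, hus, huc, rfl⟩
      have h2 : g ≤ 2 * μ t := by
        have := (ENNReal.div_lt_iff (Or.inl two_ne_zero) (Or.inl ENNReal.ofNat_ne_top)).mp hm
        rw [mul_comm] at this
        exact this.le
      exact h1.trans h2
  choose T hT1 hT2 hT3 hT4 using hstep
  -- the recursive sequence
  let F : ℕ → {A : Set Ω // P A} := fun n => Nat.rec
    ⟨∅, MeasurableSet.empty, Set.empty_subset _, by simp⟩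
    (fun _ A => ⟨A.1 ∪ T A, A.2.1.union (hT1 A),
      Set.union_subset A.2.2.1 ((hT2 A).trans Set.diff_subset),
      le_trans (measure_union_le _ _) (hT3 A)⟩) n
  have hFsucc : ∀ n, (F (n + 1)).1 = (F n).1 ∪ T (F n) := fun n => rfl
  have hdisj : ∀ n, Disjoint (F n).1 (T (F n)) := fun n =>
    Set.disjoint_of_subset_right (hT2 (F n)) disjoint_sdiff_self_right
  have hFmeas : ∀ n, μ (F (n + 1)).1 = μ (F n).1 + μ (T (F n)) := fun n => by
    rw [hFsucc, measure_union (hdisj n) (hT1 (F n))]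
  have hmono : Monotone fun n => (F n).1 := by
    apply monotone_nat_of_le_succ
    intro n
    rw [hFsucc]
    exact Set.subset_union_left
  set Ainf : Set Ω := ⋃ n, (F n).1 with hAinf
  have hsub : ∀ n, (F n).1 ⊆ Ainf := fun n =>
    hAinf ▸ Set.subset_iUnion (fun k => (F k).1) n
  have hAm : MeasurableSet Ainf := MeasurableSet.iUnion fun n => (F n).2.1
  have hAS : Ainf ⊆ S := Set.iUnion_subset fun n => (F n).2.2.1
  have hAval : μ Ainf = ⨆ n, μ (F n).1 :=
    Directed.measure_iUnion (hmono.directed_le)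
  have hAle : μ Ainf ≤ c := by
    rw [hAval]
    exact iSup_le fun n => (F n).2.2.2
  refine ⟨Ainf, hAm, hAS, ?_⟩
  by_contra hne
  have hlt : μ Ainf < c := lt_of_le_of_ne hAle hne
  have hεpos : 0 < c - μ Ainf := tsub_pos_of_lt hlt
  have hdiffpos : 0 < μ (S \ Ainf) := by
    refine lt_of_lt_of_le hεpos (le_trans ?_ (le_measure_diff))
    exact tsub_le_tsub_right hc _
  obtain ⟨t, htm, hts, htpos, htle⟩ := aux_small hat (hS.diff hAm) hdiffpos hεpos
  -- t is a competitor at every stage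
  have hcomp : ∀ n, μ t ≤ 2 * μ (T (F n)) := by
    intro n
    refine hT4 (F n) t htm ?_ ?_
    · exact hts.trans (Set.diff_subset_diff_right (hsub n))
    · calc μ (F n).1 + μ t ≤ μ Ainf + (c - μ Ainf) := by
            exact add_le_add (measure_mono (hsub n)) htle
        _ = c := add_tsub_cancel_of_le hlt.le
  have hgrow : ∀ n : ℕ, (n : ℝ≥0∞) * μ t ≤ 2 * μ (F n).1 := by
    intro n
    induction n with
    | zero => simp
    | succ n ih =>
      rw [hFmeas, mul_add]
      push_cast
      rw [add_mul, one_mul]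
      exact add_le_add ih (hcomp n)
  obtain ⟨n, hn⟩ := ENNReal.exists_nat_gt
    (ENNReal.div_lt_top (ENNReal.ofNat_ne_top (n := 2)) htpos.ne' ).ne
  have h2 : (2 : ℝ≥0∞) < n * μ t := by
    have := (ENNReal.div_lt_iff (Or.inl htpos.ne') (Or.inl (measure_ne_top μ t))).mp hn
    rwa [] at this
  have h3 : (n : ℝ≥0∞) * μ t ≤ 2 := by
    refine (hgrow n).trans ?_
    calc 2 * μ (F n).1 ≤ 2 * 1 := by
          exact mul_le_mul_right prob_le_one 2
      _ = 2 := mul_one 2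
  exact absurd (h2.trans_le h3) (lt_irrefl _)

end AuxSierpinski

/-- The functional `𝒰(Z) = E[Z] - Var(Z)·|2 - Var(Z)|`
exhibits weak risk aversion but fails diversification on antimonotonic and
identically distributed pairs; concretely, for a partition with
`P(A) = P(B) = 1/3` and `X = 3·1_A`, `Y = 3·1_B`, one has `𝒰(X) = 1 > 1/4 =
𝒰((X+Y)/2)`. -/
theorem weakRiskAverse_not_diversification_AM_ID
    {Ω : Type*} [MeasurableSpace Ω] (μ : Measure Ω) [IsProbabilityMeasure μ]
    (hatomless : Atomless μ)
    (U : (Ω → ℝ) → ℝ)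
    (hU : ∀ Z : Ω → ℝ, U Z = (∫ ω, Z ω ∂μ) -
      ((∫ ω, (Z ω) ^ 2 ∂μ) - (∫ ω, Z ω ∂μ) ^ 2) *
        |2 - ((∫ ω, (Z ω) ^ 2 ∂μ) - (∫ ω, Z ω ∂μ) ^ 2)|) :
    (∀ X : Ω → ℝ, MemLp X ∞ μ →
      U X ≤ (∫ ω, X ω ∂μ) ∧ U (fun _ => ∫ ω, X ω ∂μ) = ∫ ω, X ω ∂μ) ∧
    (∀ A B : Set Ω, MeasurableSet A → MeasurableSet B → Disjoint A B →
      μ A = 1/3 → μ B = 1/3 →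
      Antimonotonic μ (fun ω => 3 * A.indicator (fun _ => (1:ℝ)) ω)
        (fun ω => 3 * B.indicator (fun _ => (1:ℝ)) ω) ∧
      SameDist μ (fun ω => 3 * A.indicator (fun _ => (1:ℝ)) ω)
        (fun ω => 3 * B.indicator (fun _ => (1:ℝ)) ω) ∧
      U (fun ω => 3 * A.indicator (fun _ => (1:ℝ)) ω) = 1 ∧
      U (fun ω => (3 * A.indicator (fun _ => (1:ℝ)) ω +
        3 * B.indicator (fun _ => (1:ℝ)) ω) / 2) = 1/4) ∧
    (∃ X Y : Ω → ℝ, MemLp X ∞ μ ∧ MemLp Y ∞ μ ∧ Antimonotonic μ X Y ∧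
      SameDist μ X Y ∧ U (fun ω => (X ω + Y ω) / 2) < U X) := by
  classical
  -- pointwise values of scaled indicators
  have hval : ∀ (C : Set Ω) (c : ℝ) (ω : Ω),
      c * C.indicator (fun _ => (1:ℝ)) ω = if ω ∈ C then c else 0 := by
    intro C c ω
    by_cases h : ω ∈ C <;> simp [h]
  have hmeas : ∀ (C : Set Ω), MeasurableSet C →
      Measurable fun ω => 3 * C.indicator (fun _ => (1:ℝ)) ω := fun C hC =>
    ((measurable_const (a := (1:ℝ))).indicator hC).const_mul 3
  have hint : ∀ (C : Set Ω) (c : ℝ), MeasurableSet C →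
      ∫ ω, c * C.indicator (fun _ => (1:ℝ)) ω ∂μ = c * (μ C).toReal := by
    intro C c hC
    rw [MeasureTheory.integral_const_mul]
    congr 1
    exact integral_indicator_one hC
  -- Part 1 : weak risk aversion
  have part1 : ∀ X : Ω → ℝ, MemLp X ∞ μ →
      U X ≤ (∫ ω, X ω ∂μ) ∧ U (fun _ => ∫ ω, X ω ∂μ) = ∫ ω, X ω ∂μ := by
    intro X hX
    have hX2 : MemLp X 2 μ := hX.mono_exponent le_top
    have hvar : 0 ≤ (∫ ω, X ω ^ 2 ∂μ) - (∫ ω, X ω ∂μ) ^ 2 := by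
      have h := ProbabilityTheory.variance_nonneg X μ
      rw [ProbabilityTheory.variance_eq_sub hX2] at h
      simpa using h
    constructor
    · rw [hU]
      have h2 := abs_nonneg (2 - ((∫ ω, X ω ^ 2 ∂μ) - (∫ ω, X ω ∂μ) ^ 2))
      nlinarith [mul_nonneg hvar h2]
    · rw [hU]
      simp [integral_const, measure_univ]
  -- Part 2 : the concrete computation
  have part2 : ∀ A B : Set Ω, MeasurableSet A → MeasurableSet B → Disjoint A B →
      μ A = 1/3 → μ B = 1/3 →
      Antimonotonic μ (fun ω => 3 * A.indicator (fun _ => (1:ℝ)) ω)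
        (fun ω => 3 * B.indicator (fun _ => (1:ℝ)) ω) ∧
      SameDist μ (fun ω => 3 * A.indicator (fun _ => (1:ℝ)) ω)
        (fun ω => 3 * B.indicator (fun _ => (1:ℝ)) ω) ∧
      U (fun ω => 3 * A.indicator (fun _ => (1:ℝ)) ω) = 1 ∧
      U (fun ω => (3 * A.indicator (fun _ => (1:ℝ)) ω +
        3 * B.indicator (fun _ => (1:ℝ)) ω) / 2) = 1/4 := by
    intro A B hA hB hAB hμA hμB
    have hμAr : (μ A).toReal = 1/3 := by
      rw [hμA, ENNReal.toReal_div]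
      norm_num
    have hμAB : μ (A ∪ B) = 2/3 := by
      rw [measure_union hAB hB, hμA, hμB, ENNReal.div_add_div_same]
      norm_num
    have hμABr : (μ (A ∪ B)).toReal = 2/3 := by
      rw [hμAB, ENNReal.toReal_div]
      norm_num
    refine ⟨?_, ?_, ?_, ?_⟩
    · -- antimonotonic
      refine Filter.Eventually.of_forall ?_
      intro p
      by_cases h1 : p.1 ∈ A <;> by_cases h2 : p.2 ∈ A <;>
        by_cases h3 : p.1 ∈ B <;> by_cases h4 : p.2 ∈ B
      all_goals
        first
          | exact absurd ‹p.1 ∈ B› (Set.disjoint_left.mp hAB ‹p.1 ∈ A›)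
          | exact absurd ‹p.2 ∈ B› (Set.disjoint_left.mp hAB ‹p.2 ∈ A›)
          | (simp only [Set.indicator_apply, h1, h2, h3, h4, if_true, if_false]; norm_num)
    · -- same distribution
      have hpre : ∀ (C : Set Ω) (s : Set ℝ),
          (fun ω => 3 * C.indicator (fun _ => (1:ℝ)) ω) ⁻¹' s =
            (if (3:ℝ) ∈ s then C else ∅) ∪ (if (0:ℝ) ∈ s then Cᶜ else ∅) := by
        intro C s
        ext ω
        by_cases h : ω ∈ C <;> by_cases h3 : (3:ℝ) ∈ s <;> by_cases h0 : (0:ℝ) ∈ s <;>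
          simp [Set.mem_preimage, hval, h, h3, h0]
      have hcomp : μ Aᶜ = μ Bᶜ := by
        rw [measure_compl hA (measure_ne_top μ A), measure_compl hB (measure_ne_top μ B),
          hμA, hμB]
      refine Measure.ext fun s hs => ?_
      rw [Measure.map_apply (hmeas A hA) hs, Measure.map_apply (hmeas B hB) hs,
        hpre, hpre]
      split_ifs <;> simp [Set.union_compl_self, hμA, hμB, hcomp]
    · -- U X = 1
      have hsq : (fun ω => (3 * A.indicator (fun _ => (1:ℝ)) ω) ^ 2) =
          fun ω => 9 * A.indicator (fun _ => (1:ℝ)) ω := by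
        funext ω
        by_cases h : ω ∈ A <;> simp [h] <;> norm_num
      rw [hU]
      rw [show (∫ ω, (3 * A.indicator (fun _ => (1:ℝ)) ω) ^ 2 ∂μ) =
          ∫ ω, 9 * A.indicator (fun _ => (1:ℝ)) ω ∂μ from congrArg _ hsq]
      rw [hint A 3 hA, hint A 9 hA, hμAr]
      norm_num
    · -- U ((X+Y)/2) = 1/4
      have hZ : (fun ω => (3 * A.indicator (fun _ => (1:ℝ)) ω +
          3 * B.indicator (fun _ => (1:ℝ)) ω) / 2) =
          fun ω => (3/2) * (A ∪ B).indicator (fun _ => (1:ℝ)) ω := by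
        funext ω
        by_cases h1 : ω ∈ A <;> by_cases h2 : ω ∈ B
        · exact absurd h2 (Set.disjoint_left.mp hAB h1)
        all_goals simp [Set.indicator_apply, h1, h2] <;> norm_num
      have hsq : (fun ω => ((3 * A.indicator (fun _ => (1:ℝ)) ω +
          3 * B.indicator (fun _ => (1:ℝ)) ω) / 2) ^ 2) =
          fun ω => (9/4 : ℝ) * (A ∪ B).indicator (fun _ => (1:ℝ)) ω := by
        funext ω
        by_cases h1 : ω ∈ A <;> by_cases h2 : ω ∈ B
        · exact absurd h2 (Set.disjoint_left.mp hAB h1)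
        all_goals simp [Set.indicator_apply, h1, h2] <;> norm_num
      rw [hU, hZ]
      rw [show (∫ ω, ((3 * A.indicator (fun _ => (1:ℝ)) ω +
          3 * B.indicator (fun _ => (1:ℝ)) ω) / 2) ^ 2 ∂μ) =
          ∫ ω, (9/4 : ℝ) * (A ∪ B).indicator (fun _ => (1:ℝ)) ω ∂μ from congrArg _ hsq]
      rw [hint (A ∪ B) (3/2) (hA.union hB), hint (A ∪ B) (9/4) (hA.union hB), hμABr]
      rw [show (2 : ℝ) - (9/4 * (2/3) - (3/2 * (2/3))^2) = 3/2 by norm_num]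
      rw [abs_of_nonneg (by norm_num : (0:ℝ) ≤ 3/2)]
      norm_num
  refine ⟨part1, part2, ?_⟩
  -- Part 3 : existence
  have h13 : (1/3 : ℝ≥0∞) ≤ μ Set.univ := by
    rw [measure_univ]
    rw [ENNReal.div_le_iff (by norm_num) (by norm_num)]
    norm_num
  obtain ⟨A, hA, -, hμA⟩ := aux_sierpinski hatomless MeasurableSet.univ h13
  have hμAc : μ Aᶜ = 2/3 := by
    rw [measure_compl hA (measure_ne_top μ A), hμA, measure_univ]
    refine ENNReal.sub_eq_of_eq_add (by norm_num) ?_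
    rw [ENNReal.div_add_div_same]
    rw [show (2 + 1 : ℝ≥0∞) = 3 by norm_num, ENNReal.div_self (by norm_num) (by norm_num)]
  have h13' : (1/3 : ℝ≥0∞) ≤ μ Aᶜ := by
    rw [hμAc]
    exact ENNReal.div_le_div_right (by norm_num) 3
  obtain ⟨B, hB, hBsub, hμB⟩ := aux_sierpinski hatomless hA.compl h13'
  have hABdisj : Disjoint A B := disjoint_compl_right.mono_right hBsub
  obtain ⟨ham, hsd, hU1, hU4⟩ := part2 A B hA hB hABdisj hμA hμB
  refine ⟨fun ω => 3 * A.indicator (fun _ => (1:ℝ)) ω,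
    fun ω => 3 * B.indicator (fun _ => (1:ℝ)) ω, ?_, ?_, ham, hsd, ?_⟩
  · refine memLp_top_of_bound (hmeas A hA).aestronglyMeasurable 3 (ae_of_all _ ?_)
    intro ω
    by_cases h : ω ∈ A <;> simp [h]
  · refine memLp_top_of_bound (hmeas B hB).aestronglyMeasurable 3 (ae_of_all _ ?_)
    intro ω
    by_cases h : ω ∈ B <;> simp [h]
  · show U (fun ω => (3 * A.indicator (fun _ => (1:ℝ)) ω +
        3 * B.indicator (fun _ => (1:ℝ)) ω) / 2) <
      U (fun ω => 3 * A.indicator (fun _ => (1:ℝ)) ω)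
    rw [hU1, hU4]
    norm_num
end

section
/- Let (Ω,𝓕,ℙ) be an atomless probability space and define 𝒰(Z) = E[Z] − (Var(Z))^{1/4} for Z ∈ L^∞, and let ≿ be the relation X ≿ Y iff 𝒰(X) ≥ 𝒰(Y). Then ≿ exhibits strong risk aversion (X ≥_cv Y implies 𝒰(X) ≥ 𝒰(Y)), but ≿ fails diversification on antimonotonic pairs: there exist X, Y ∈ L^∞ with (X,Y) antimonotonic and 𝒰(X) = 𝒰(Y), such that 𝒰((X+Y)/2) < 𝒰(X). Concretely, taking X ≡ 1 constant and Y taking values 1 and 3 each with probability 1/2, one has 𝒰(X) = 𝒰(Y) = 1 and 𝒰((X+Y)/2) = 3/2 − (1/2)^{1/2} < 1. Hence strong risk aversion does not imply diversification on antimonotonic pairs. -/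
open MeasureTheory ProbabilityTheory Filter
open scoped ENNReal

section Aux

variable {Ω : Type*} [MeasurableSpace Ω] {μ : Measure Ω}

lemma aux_int_indicator [IsFiniteMeasure μ] {S : Set Ω} (hS : MeasurableSet S) :
    Integrable (S.indicator fun _ => (1:ℝ)) μ :=
  (integrable_const (1:ℝ)).indicator hS

lemma aux_integral_indicator [IsFiniteMeasure μ] {S : Set Ω} (hS : MeasurableSet S) :
    ∫ ω, S.indicator (fun _ => (1:ℝ)) ω ∂μ = (μ S).toReal := by
  rw [integral_indicator_const (1:ℝ) hS, smul_eq_mul, mul_one]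
  rfl

/-- First and second moments of `a + b·1_S`. -/
lemma aux_moments [IsProbabilityMeasure μ] {S : Set Ω} (hS : MeasurableSet S) (a b : ℝ) :
    (∫ ω, (a + b * S.indicator (fun _ => (1:ℝ)) ω) ∂μ) = a + b * (μ S).toReal ∧
    (∫ ω, (a + b * S.indicator (fun _ => (1:ℝ)) ω) ^ 2 ∂μ)
      = a ^ 2 + (2 * a * b + b ^ 2) * (μ S).toReal := by
  have hI := aux_int_indicator (μ := μ) hS
  have hEI := aux_integral_indicator (μ := μ) hS
  constructor
  · rw [integral_add (integrable_const a) (hI.const_mul b), integral_const,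
      integral_const_mul, hEI]
    simp
  · have hfun : (fun ω => (a + b * S.indicator (fun _ => (1:ℝ)) ω) ^ 2)
        = fun ω => a ^ 2 + (2 * a * b + b ^ 2) * S.indicator (fun _ => (1:ℝ)) ω := by
      funext ω
      by_cases hω : ω ∈ S <;> simp [Set.indicator_apply, hω] <;> ring
    rw [hfun, integral_add (integrable_const _) (hI.const_mul _), integral_const,
      integral_const_mul, hEI]
    simp

/-- Value of `𝒰` on `a + b·1_S`. -/
lemma aux_U_val [IsProbabilityMeasure μ] (U : (Ω → ℝ) → ℝ)
    (hU : ∀ Z : Ω → ℝ, U Z = (∫ ω, Z ω ∂μ) -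
      ((∫ ω, (Z ω) ^ 2 ∂μ) - (∫ ω, Z ω ∂μ) ^ 2) ^ ((1 : ℝ)/4))
    {S : Set Ω} (hS : MeasurableSet S) (a b : ℝ) :
    U (fun ω => a + b * S.indicator (fun _ => (1:ℝ)) ω)
      = a + b * (μ S).toReal -
        (b ^ 2 * ((μ S).toReal - (μ S).toReal ^ 2)) ^ ((1 : ℝ)/4) := by
  obtain ⟨h1, h2⟩ := aux_moments (μ := μ) hS a b
  rw [hU _, h1, h2]
  congr 1
  congr 1
  ring

lemma aux_antimono_const [IsFiniteMeasure μ] (c : ℝ) (Y : Ω → ℝ) :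
    Antimonotonic μ (fun _ => c) Y := by
  refine Filter.Eventually.of_forall fun p => ?_
  simp

/-- `𝒰` of a constant is that constant. -/
lemma aux_U_const [IsProbabilityMeasure μ] (U : (Ω → ℝ) → ℝ)
    (hU : ∀ Z : Ω → ℝ, U Z = (∫ ω, Z ω ∂μ) -
      ((∫ ω, (Z ω) ^ 2 ∂μ) - (∫ ω, Z ω ∂μ) ^ 2) ^ ((1 : ℝ)/4))
    (c : ℝ) : U (fun _ => c) = c := by
  rw [hU _]
  simp only [integral_const, probReal_univ, one_smul, smul_eq_mul, one_mul]
  rw [sub_self, Real.zero_rpow (by norm_num : (1:ℝ)/4 ≠ 0), sub_zero]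

/-- Strong risk aversion of `𝒰`. -/
lemma aux_sra [IsProbabilityMeasure μ] (U : (Ω → ℝ) → ℝ)
    (hU : ∀ Z : Ω → ℝ, U Z = (∫ ω, Z ω ∂μ) -
      ((∫ ω, (Z ω) ^ 2 ∂μ) - (∫ ω, Z ω ∂μ) ^ 2) ^ ((1 : ℝ)/4))
    (X Y : Ω → ℝ) (hX : MemLp X ∞ μ) (hY : MemLp Y ∞ μ)
    (h : ConcaveOrdGE μ X Y) : U Y ≤ U X := by
  have hXi : Integrable X μ := hX.integrable le_top
  have hX2 : Integrable (fun ω => X ω ^ 2) μ :=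
    (hX.mono_exponent (le_top : (2:ℝ≥0∞) ≤ ∞)).integrable_sq
  -- equality of means
  have h1 : (∫ ω, Y ω ∂μ) ≤ ∫ ω, X ω ∂μ := h id (concaveOn_id convex_univ)
  have h2 : (∫ ω, -(Y ω) ∂μ) ≤ ∫ ω, -(X ω) ∂μ := h (fun x => -x) ((convexOn_id convex_univ).neg)
  rw [integral_neg, integral_neg, neg_le_neg_iff] at h2
  have hmean : (∫ ω, X ω ∂μ) = ∫ ω, Y ω ∂μ := le_antisymm h2 h1
  -- comparison of second moments
  have h3 : (∫ ω, -(Y ω ^ 2) ∂μ) ≤ ∫ ω, -(X ω ^ 2) ∂μ :=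
    h (fun x => -(x ^ 2)) ((Even.convexOn_pow even_two).neg)
  rw [integral_neg, integral_neg, neg_le_neg_iff] at h3
  -- variance of X is nonnegative
  set m : ℝ := ∫ ω, X ω ∂μ with hm
  have hvar0 : 0 ≤ (∫ ω, X ω ^ 2 ∂μ) - m ^ 2 := by
    have hnn : 0 ≤ ∫ ω, (X ω - m) ^ 2 ∂μ := integral_nonneg fun ω => sq_nonneg _
    have hexp : ∫ ω, (X ω - m) ^ 2 ∂μ
        = (∫ ω, X ω ^ 2 ∂μ) - (2 * m) * m + m ^ 2 := by
      calc ∫ ω, (X ω - m) ^ 2 ∂μ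
          = ∫ ω, (X ω ^ 2 - (2 * m) * X ω + m ^ 2) ∂μ := by
            congr 1; funext ω; ring
        _ = (∫ ω, (X ω ^ 2 - (2 * m) * X ω) ∂μ) + ∫ _, (m ^ 2 : ℝ) ∂μ :=
            integral_add (hX2.sub (hXi.const_mul _)) (integrable_const _)
        _ = (∫ ω, X ω ^ 2 ∂μ) - (2 * m) * m + m ^ 2 := by
            rw [integral_sub hX2 (hXi.const_mul _), integral_const_mul, integral_const]
            simp [hm]
    nlinarith [hnn, hexp]
  -- conclude
  rw [hU X, hU Y, ← hm, hmean]
  have hle : (∫ ω, X ω ^ 2 ∂μ) - (∫ ω, Y ω ∂μ) ^ 2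
      ≤ (∫ ω, Y ω ^ 2 ∂μ) - (∫ ω, Y ω ∂μ) ^ 2 := by linarith
  have hge : 0 ≤ (∫ ω, X ω ^ 2 ∂μ) - (∫ ω, Y ω ∂μ) ^ 2 := by
    rw [← hmean]; exact hvar0
  have := Real.rpow_le_rpow hge hle (by norm_num : (0:ℝ) ≤ 1/4)
  linarith

end Aux

/-- The functional `𝒰(Z) = E[Z] - Var(Z)^{1/4}` exhibits
strong risk aversion but fails diversification on antimonotonic pairs;
concretely, for `X ≡ 1` and `Y` taking values `1` and `3` with probability
`1/2` each, `𝒰(X) = 𝒰(Y) = 1` while `𝒰((X+Y)/2) = 3/2 - (1/2)^{1/2} < 1`. -/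
theorem strongRiskAverse_not_diversification_AM
    {Ω : Type*} [MeasurableSpace Ω] (μ : Measure Ω) [IsProbabilityMeasure μ]
    (hatomless : Atomless μ)
    (U : (Ω → ℝ) → ℝ)
    (hU : ∀ Z : Ω → ℝ, U Z = (∫ ω, Z ω ∂μ) -
      ((∫ ω, (Z ω) ^ 2 ∂μ) - (∫ ω, Z ω ∂μ) ^ 2) ^ ((1 : ℝ)/4)) :
    (∀ X Y : Ω → ℝ, MemLp X ∞ μ → MemLp Y ∞ μ → ConcaveOrdGE μ X Y → U Y ≤ U X) ∧
    (∀ S : Set Ω, MeasurableSet S → μ S = 1/2 →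
      Antimonotonic μ (fun _ => (1 : ℝ)) (fun ω => 1 + 2 * S.indicator (fun _ => (1:ℝ)) ω) ∧
      U (fun _ => (1 : ℝ)) = 1 ∧
      U (fun ω => 1 + 2 * S.indicator (fun _ => (1:ℝ)) ω) = 1 ∧
      U (fun ω => ((1 : ℝ) + (1 + 2 * S.indicator (fun _ => (1:ℝ)) ω)) / 2) =
        3/2 - (1/2 : ℝ) ^ ((1 : ℝ)/2) ∧
      3/2 - (1/2 : ℝ) ^ ((1 : ℝ)/2) < 1) ∧
    (∃ X Y : Ω → ℝ, MemLp X ∞ μ ∧ MemLp Y ∞ μ ∧ Antimonotonic μ X Y ∧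
      U X = U Y ∧ U (fun ω => (X ω + Y ω) / 2) < U X) := by
  have h16 : ((16:ℝ)) ^ ((1:ℝ)/4) = 2 := by
    rw [show (16:ℝ) = (2:ℝ) ^ (4:ℕ) by norm_num, ← Real.rpow_natCast (2:ℝ) 4,
      ← Real.rpow_mul (by norm_num : (0:ℝ) ≤ 2)]
    norm_num
  have h44 : (4:ℝ) ^ ((1:ℝ)/4) < 2 := by
    have := Real.rpow_lt_rpow (by norm_num : (0:ℝ) ≤ 4) (by norm_num : (4:ℝ) < 16)
      (by norm_num : (0:ℝ) < 1/4)
    rwa [h16] at this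
  refine ⟨fun X Y hX hY h => aux_sra U hU X Y hX hY h, ?_, ?_⟩
  · -- the concrete example with `μ S = 1/2`
    intro S hS hS2
    have hp : (μ S).toReal = 1/2 := by
      rw [hS2, ENNReal.toReal_div]
      simp
    have hsqrt : ((1:ℝ)/2) ^ ((1:ℝ)/2) = Real.sqrt (1/2) := by
      rw [Real.sqrt_eq_rpow]
    have hlt : 3/2 - (1/2 : ℝ) ^ ((1 : ℝ)/2) < 1 := by
      rw [hsqrt]
      nlinarith [Real.sq_sqrt (show (0:ℝ) ≤ 1/2 by norm_num),
        Real.sqrt_nonneg ((1:ℝ)/2)]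
    refine ⟨aux_antimono_const 1 _, aux_U_const U hU 1, ?_, ?_, hlt⟩
    · rw [aux_U_val U hU hS 1 2, hp]
      norm_num [Real.one_rpow]
    · have hfun : (fun ω => ((1 : ℝ) + (1 + 2 * S.indicator (fun _ => (1:ℝ)) ω)) / 2)
          = fun ω => 1 + 1 * S.indicator (fun _ => (1:ℝ)) ω := by
        funext ω; ring
      rw [hfun, aux_U_val U hU hS 1 1, hp]
      have hbase : (1:ℝ) ^ 2 * ((1/2:ℝ) - (1/2) ^ 2) = 1/4 := by norm_num
      rw [hbase, show ((1:ℝ)/4) = ((1/2:ℝ)) ^ (2:ℕ) by norm_num,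
        ← Real.rpow_natCast ((1:ℝ)/2) 2, ← Real.rpow_mul (by norm_num : (0:ℝ) ≤ 1/2)]
      norm_num
  · -- failure of diversification on an antimonotonic pair
    obtain ⟨t, ht, -, htpos, htlt⟩ := hatomless Set.univ MeasurableSet.univ (by simp)
    rw [measure_univ] at htlt
    set p : ℝ := (μ t).toReal with hpdef
    have hp0 : 0 < p := ENNReal.toReal_pos htpos.ne' (measure_ne_top μ t)
    have hp1 : p < 1 := by
      have := (ENNReal.toReal_lt_toReal (measure_ne_top μ t)
        (by norm_num : (1:ℝ≥0∞) ≠ ⊤)).mpr htlt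
      simpa using this
    have hw : 0 < p - p ^ 2 := by nlinarith
    set c : ℝ := 1 + 2 * p - ((2:ℝ) ^ 2 * (p - p ^ 2)) ^ ((1:ℝ)/4) with hc
    refine ⟨fun _ => c, fun ω => 1 + 2 * t.indicator (fun _ => (1:ℝ)) ω,
      memLp_const c, ?_, aux_antimono_const c _, ?_, ?_⟩
    · exact (memLp_const (1:ℝ)).add
        ((memLp_indicator_const ∞ ht (1:ℝ) (Or.inr (measure_ne_top μ t))).const_mul 2)
    · rw [aux_U_const U hU c, aux_U_val U hU ht 1 2, ← hpdef, hc]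
    · show U (fun ω => (c + (1 + 2 * t.indicator (fun _ => (1:ℝ)) ω)) / 2)
        < U (fun _ => c)
      rw [show (fun ω => (c + (1 + 2 * t.indicator (fun _ => (1:ℝ)) ω)) / 2)
          = fun ω => (c + 1)/2 + 1 * t.indicator (fun _ => (1:ℝ)) ω from
          funext fun ω => by ring,
        aux_U_val U hU ht _ _, aux_U_const U hU c, ← hpdef]
      have h1 : ((1:ℝ) ^ 2 * (p - p ^ 2)) ^ ((1:ℝ)/4) = (p - p ^ 2) ^ ((1:ℝ)/4) := by
        rw [one_pow, one_mul]
      have h4 : ((2:ℝ) ^ 2 * (p - p ^ 2)) ^ ((1:ℝ)/4)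
          = (4:ℝ) ^ ((1:ℝ)/4) * (p - p ^ 2) ^ ((1:ℝ)/4) := by
        rw [show ((2:ℝ) ^ 2) = 4 by norm_num, Real.mul_rpow (by norm_num) hw.le]
      have hwpos : 0 < (p - p ^ 2) ^ ((1:ℝ)/4) := Real.rpow_pos_of_pos hw _
      rw [h1, hc, h4]
      nlinarith [mul_pos (sub_pos.mpr h44) hwpos]
end
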